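/- arXiv:2104.05278 — 4 statements merged into one kernel-verified Lean document; each statement's English description precedes it below -/
import Mathlib

section
/- Let d ≥ 2, M ≥ 2, T > 0. Let {(x_i, y_i)}_{i=1}^N ⊂ ℝ^d × ℝ^d be a finite dataset with x_i ≠ x_j for i ≠ j, where each label y_i takes one of M distinct values, and let m(i) ∈ {1,…,M} be the index of the label of x_i. Fix real numbers α_1 < α_2 < ⋯ < α_{M−1} and define the strips S_1 = {x ∈ ℝ^d : x^{(1)} ≤ α_1}, S_m = {x ∈ ℝ^d : α_{m−1} < x^{(1)} ≤ α_m} for 2 ≤ m ≤ M−1, and S_M = {x ∈ ℝ^d : x^{(1)} > α_{M−1}}. Then there exist piecewise constant controls A, W : [0,T] → ℝ^{d×d} and b : [0,T] → ℝ^d, with finitely many switching times, such that for every i ∈ {1,…,N} the flow of the Neural ODE satisfies φ_T(x_i; A, W, b) ∈ S_{m(i)}. -/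
/-!
A ReLU neuron field `x ↦ (⟪a, x⟫ + β)₊ w` with `a ⊥ w` is constant along its own trajectories, so
switching between such fields on a uniform time grid realises exactly the composition of the maps
`x ↦ x + (⟪a, x⟫ + β)₊ w`. A first neuron writes into the second coordinate an affine functional `ℓ`
that is injective on the data (a point of the moment curve avoiding finitely many root sets). Then,
for each datum `xᵢ`, three neurons that read only the second coordinate and write only the first
add a multiple of a tent function of `ℓ - ℓ(xᵢ)`, narrow enough to vanish at the other data; this
moves the first coordinate of `xᵢ` to a chosen point of its strip and leaves the other data
in place.
-/

open MeasureTheory Set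

noncomputable section

/-- The ReLU activation applied componentwise. -/
def reluVec {d : ℕ} (x : EuclideanSpace ℝ (Fin d)) : EuclideanSpace ℝ (Fin d) :=
  WithLp.toLp 2 (fun k => max (x k) 0)

/-- A matrix acting on a vector of `EuclideanSpace ℝ (Fin d)`. -/
def mvec {d : ℕ} (M : Matrix (Fin d) (Fin d) ℝ) (x : EuclideanSpace ℝ (Fin d)) :
    EuclideanSpace ℝ (Fin d) :=
  WithLp.toLp 2 (fun i => ∑ j, M i j * x j)

/-- `f` is piecewise constant on `[0,T]` with (finite) switching set `S`:
it is constant on the pieces of `[0,T]` between consecutive points of `S`. -/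
def PCOn {α : Type*} (f : ℝ → α) (T : ℝ) (S : Finset ℝ) : Prop :=
  ∀ t₁ ∈ Set.Icc (0:ℝ) T, ∀ t₂ ∈ Set.Icc (0:ℝ) T, t₁ ≤ t₂ →
    (∀ s ∈ S, s ∉ Set.Ioc t₁ t₂) → f t₁ = f t₂

/-- `x` is a solution on `[0,T]` of the neural ODE
`ẋ = W(t) σ(A(t) x + b(t))` (ReLU activation), with switching set `S`. -/
def SolvesNODE {d : ℕ} (A W : ℝ → Matrix (Fin d) (Fin d) ℝ)
    (b : ℝ → EuclideanSpace ℝ (Fin d)) (T : ℝ) (S : Finset ℝ)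
    (x : ℝ → EuclideanSpace ℝ (Fin d)) : Prop :=
  ContinuousOn x (Set.Icc 0 T) ∧
  ∀ t ∈ Set.Icc (0:ℝ) T, t ∉ S →
    HasDerivWithinAt x (mvec (W t) (reluVec (mvec (A t) (x t) + b t))) (Set.Icc 0 T) t

/-- `φ` is the time-`T` flow map of the neural ODE. -/
def IsFlowNODE {d : ℕ} (A W : ℝ → Matrix (Fin d) (Fin d) ℝ)
    (b : ℝ → EuclideanSpace ℝ (Fin d)) (T : ℝ) (S : Finset ℝ)
    (φ : EuclideanSpace ℝ (Fin d) → EuclideanSpace ℝ (Fin d)) : Prop :=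
  ∀ x₀, ∃ x, SolvesNODE A W b T S x ∧ x 0 = x₀ ∧ x T = φ x₀

/-- The operator norm of a matrix acting on Euclidean space. -/
def matOpNorm {d : ℕ} (M : Matrix (Fin d) (Fin d) ℝ) : ℝ :=
  sSup ((fun x => ‖mvec M x‖) '' Metric.closedBall (0 : EuclideanSpace ℝ (Fin d)) 1)

/-- `Γ` can be covered, for every `h ∈ (0,1)`, by at most `C h^(-D)` closed
axis-parallel cubes of side `h`. -/
def CoveredByCubes {d : ℕ} (Γ : Set (EuclideanSpace ℝ (Fin d))) (C D : ℝ) : Prop :=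
  ∀ h : ℝ, 0 < h → h < 1 →
    ∃ F : Finset (EuclideanSpace ℝ (Fin d)),
      (F.card : ℝ) ≤ C * h ^ (-D) ∧
      Γ ⊆ ⋃ c ∈ F, {x | ∀ k, c k ≤ x k ∧ x k ≤ c k + h}

open scoped RealInnerProductSpace

section Matrices

variable {d : ℕ}

def rowMatrix (p : Fin d) (a : EuclideanSpace ℝ (Fin d)) : Matrix (Fin d) (Fin d) ℝ :=
  Matrix.of fun i j => if i = p then a j else 0

def colMatrix (p : Fin d) (w : EuclideanSpace ℝ (Fin d)) : Matrix (Fin d) (Fin d) ℝ :=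
  Matrix.of fun i j => if j = p then w i else 0

lemma mvec_rowMatrix (p : Fin d) (a x : EuclideanSpace ℝ (Fin d)) :
    mvec (rowMatrix p a) x = EuclideanSpace.single p ⟪a, x⟫ := by
  ext i
  by_cases hi : i = p <;> simp [mvec, rowMatrix, hi, PiLp.inner_apply, mul_comm]

lemma mvec_colMatrix (p : Fin d) (w v : EuclideanSpace ℝ (Fin d)) :
    mvec (colMatrix p w) v = v p • w := by
  ext i
  simp [mvec, colMatrix, mul_comm]

lemma reluVec_single (p : Fin d) (c : ℝ) :
    reluVec (EuclideanSpace.single p c) = EuclideanSpace.single p (max c 0) := by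
  ext i
  by_cases hi : i = p <;> simp [reluVec, hi]

end Matrices

/-- Realised in the neural ODE, for any coordinate `p`, by the controls `A = rowMatrix p a`,
`W = colMatrix p w`, `b = single p β` (see `Neuron.mvec_colMatrix_reluVec`). -/
structure Neuron (d : ℕ) where
  a : EuclideanSpace ℝ (Fin d)
  w : EuclideanSpace ℝ (Fin d)
  β : ℝ

namespace Neuron

variable {d : ℕ}

instance : Inhabited (Neuron d) := ⟨⟨0, 0, 0⟩⟩

def field (n : Neuron d) (x : EuclideanSpace ℝ (Fin d)) : EuclideanSpace ℝ (Fin d) :=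
  max (⟪n.a, x⟫ + n.β) 0 • n.w

/-- Exactly the time-one flow of `n.field` when `⟪n.a, n.w⟫ = 0`: the activation is then constant
along trajectories. -/
def step (n : Neuron d) (x : EuclideanSpace ℝ (Fin d)) : EuclideanSpace ℝ (Fin d) :=
  x + n.field x

lemma inner_field_eq_zero {n : Neuron d} {b : EuclideanSpace ℝ (Fin d)} (h : ⟪b, n.w⟫ = 0)
    (x : EuclideanSpace ℝ (Fin d)) : ⟪b, n.field x⟫ = 0 := by
  rw [field, inner_smul_right, h, mul_zero]

lemma field_add_of_inner_eq_zero (n : Neuron d) {v : EuclideanSpace ℝ (Fin d)} (h : ⟪n.a, v⟫ = 0)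
    (x : EuclideanSpace ℝ (Fin d)) : n.field (x + v) = n.field x := by
  rw [field, field, inner_add_right, h, add_zero]

lemma mvec_colMatrix_reluVec (p : Fin d) (n : Neuron d) (c : ℝ) (x : EuclideanSpace ℝ (Fin d)) :
    mvec (colMatrix p (c • n.w)) (reluVec (mvec (rowMatrix p n.a) x + EuclideanSpace.single p n.β))
      = c • n.field x := by
  rw [mvec_rowMatrix, ← PiLp.single_add, reluVec_single, mvec_colMatrix, field,
    smul_comm]
  simp

end Neuron

section PolygonalPath

variable {E : Type*} [NormedAddCommGroup E] [NormedSpace ℝ E]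

/-- The path starting at `x₀` that runs through the displacement `u k` at constant speed
during `[k τ, (k + 1) τ]`, for `k < K`. -/
def polygonalPath (τ : ℝ) (x₀ : E) (u : ℕ → E) (K : ℕ) (t : ℝ) : E :=
  x₀ + ∑ k ∈ Finset.range K, min (max ((t - k * τ) / τ) 0) 1 • u k

variable {τ : ℝ} (x₀ : E) (u : ℕ → E) (K : ℕ)

lemma continuous_polygonalPath : Continuous (polygonalPath τ x₀ u K) := by
  unfold polygonalPath
  fun_prop

lemma min_max_sub_div_eq_one (hτ : 0 < τ) {j : ℕ} {t : ℝ} (h : (j + 1) * τ ≤ t) :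
    min (max ((t - j * τ) / τ) 0) 1 = 1 :=
  min_eq_right (le_max_of_le_left ((one_le_div hτ).2 (by linarith)))

lemma min_max_sub_div_eq_zero (hτ : 0 < τ) {j : ℕ} {t : ℝ} (h : t ≤ j * τ) :
    min (max ((t - j * τ) / τ) 0) 1 = 0 := by
  rw [max_eq_right (div_nonpos_of_nonpos_of_nonneg (by linarith) hτ.le)]
  exact min_eq_left zero_le_one

lemma polygonalPath_natCast_mul (hτ : 0 < τ) {k : ℕ} (hk : k ≤ K) :
    polygonalPath τ x₀ u K (k * τ) = x₀ + ∑ j ∈ Finset.range k, u j := by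
  rw [polygonalPath, ← Finset.sum_range_add_sum_Ico _ hk]
  have hbefore : ∀ j ∈ Finset.range k, min (max ((k * τ - j * τ) / τ) 0) 1 • u j = u j := by
    intro j hj
    have : (j + 1 : ℝ) ≤ k := by exact_mod_cast Finset.mem_range.1 hj
    rw [min_max_sub_div_eq_one hτ (by nlinarith), one_smul]
  have hafter : ∀ j ∈ Finset.Ico k K, min (max ((k * τ - j * τ) / τ) 0) 1 • u j = 0 := by
    intro j hj
    have : (k : ℝ) ≤ j := by exact_mod_cast (Finset.mem_Ico.1 hj).1
    rw [min_max_sub_div_eq_zero hτ (by nlinarith), zero_smul]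
  rw [Finset.sum_congr rfl hbefore, Finset.sum_eq_zero hafter, add_zero]

lemma polygonalPath_of_mem_Icc (hτ : 0 < τ) {k : ℕ} (hk : k < K) {t : ℝ}
    (ht : t ∈ Icc (k * τ) ((k + 1) * τ)) :
    polygonalPath τ x₀ u K t = x₀ + ∑ j ∈ Finset.range k, u j + ((t - k * τ) / τ) • u k := by
  rw [polygonalPath, ← Finset.sum_range_add_sum_Ico _ hk, Finset.sum_range_succ]
  have hbefore : ∀ j ∈ Finset.range k, min (max ((t - j * τ) / τ) 0) 1 • u j = u j := by
    intro j hj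
    have : (j + 1 : ℝ) ≤ k := by exact_mod_cast Finset.mem_range.1 hj
    rw [min_max_sub_div_eq_one hτ (by nlinarith [ht.1]), one_smul]
  have hafter : ∀ j ∈ Finset.Ico (k + 1) K, min (max ((t - j * τ) / τ) 0) 1 • u j = 0 := by
    intro j hj
    have : (k + 1 : ℝ) ≤ j := by exact_mod_cast (Finset.mem_Ico.1 hj).1
    rw [min_max_sub_div_eq_zero hτ (by nlinarith [ht.2]), zero_smul]
  have hcurrent : min (max ((t - k * τ) / τ) 0) 1 = (t - k * τ) / τ := by
    rw [max_eq_left (div_nonneg (by linarith [ht.1]) hτ.le), min_eq_left]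
    rw [div_le_one hτ]
    linarith [ht.2]
  rw [Finset.sum_congr rfl hbefore, Finset.sum_eq_zero hafter, hcurrent, add_zero, add_assoc]

lemma hasDerivAt_polygonalPath (hτ : 0 < τ) {k : ℕ} (hk : k < K) {t : ℝ}
    (ht : t ∈ Ioo (k * τ) ((k + 1) * τ)) :
    HasDerivAt (polygonalPath τ x₀ u K) (τ⁻¹ • u k) t := by
  have hline : HasDerivAt (fun s => x₀ + ∑ j ∈ Finset.range k, u j + ((s - k * τ) / τ) • u k)
      (τ⁻¹ • u k) t := by
    simpa [div_eq_mul_inv] using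
      ((((hasDerivAt_id t).sub_const _).mul_const τ⁻¹).smul_const (u k)).const_add
        (x₀ + ∑ j ∈ Finset.range k, u j)
  refine hline.congr_of_eventuallyEq ?_
  filter_upwards [Ioo_mem_nhds ht.1 ht.2] with s hs
  exact polygonalPath_of_mem_Icc x₀ u K hτ hk (Ioo_subset_Icc_self hs)

end PolygonalPath

section Grid

def gridPoints (τ : ℝ) (K : ℕ) : Finset ℝ :=
  (Finset.range (K + 1)).image fun n : ℕ => n * τ

variable {τ : ℝ} {K : ℕ}

lemma mem_gridPoints {s : ℝ} : s ∈ gridPoints τ K ↔ ∃ n ≤ K, n * τ = s := by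
  simp [gridPoints]

lemma pcOn_comp_floor (hτ : 0 < τ) {α : Type*} (g : ℕ → α) :
    PCOn (fun t => g ⌊t / τ⌋₊) (K * τ) (gridPoints τ K) := by
  intro t₁ ht₁ t₂ ht₂ hle hgap
  suffices h : ⌊t₂ / τ⌋₊ ≤ ⌊t₁ / τ⌋₊ from
    congrArg g (le_antisymm (Nat.floor_le_floor (div_le_div_of_nonneg_right hle hτ.le)) h)
  by_contra! hlt
  set m := ⌊t₁ / τ⌋₊ + 1
  have hm₂ : m * τ ≤ t₂ := by
    rw [← le_div_iff₀ hτ]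
    exact (Nat.le_floor_iff (div_nonneg ht₂.1 hτ.le)).1 hlt
  have hmK : m ≤ K :=
    hlt.trans_le (Nat.floor_le_of_le ((div_le_iff₀ hτ).2 ht₂.2))
  have hm₁ : t₁ < m * τ := by
    rw [← div_lt_iff₀ hτ]
    push_cast [m]
    exact Nat.lt_floor_add_one _
  exact hgap _ (mem_gridPoints.2 ⟨m, hmK, rfl⟩) ⟨hm₁, hm₂⟩

lemma floor_lt_and_mem_Ioo (hτ : 0 < τ) {t : ℝ} (ht : t ∈ Icc 0 (K * τ))
    (hS : t ∉ gridPoints τ K) :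
    ⌊t / τ⌋₊ < K ∧ t ∈ Ioo (⌊t / τ⌋₊ * τ) ((⌊t / τ⌋₊ + 1) * τ) := by
  set k := ⌊t / τ⌋₊
  have hkt : k * τ ≤ t := (le_div_iff₀ hτ).1 (Nat.floor_le (div_nonneg ht.1 hτ.le))
  have hkK : k ≤ K := by
    exact_mod_cast le_of_mul_le_mul_right (hkt.trans ht.2) hτ
  have hkt' : k * τ < t := hkt.lt_of_ne fun h => hS (mem_gridPoints.2 ⟨k, hkK, h⟩)
  refine ⟨?_, hkt', (div_lt_iff₀ hτ).1 (Nat.lt_floor_add_one _)⟩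
  exact_mod_cast lt_of_mul_lt_mul_right (hkt'.trans_le ht.2) hτ.le

end Grid

namespace Neuron

variable {d : ℕ}

def run (ns : List (Neuron d)) (x : EuclideanSpace ℝ (Fin d)) : EuclideanSpace ℝ (Fin d) :=
  ns.foldl (fun y n => n.step y) x

lemma run_cons (n : Neuron d) (ns : List (Neuron d)) (x : EuclideanSpace ℝ (Fin d)) :
    run (n :: ns) x = run ns (n.step x) := rfl

lemma run_take (ns : List (Neuron d)) (x : EuclideanSpace ℝ (Fin d)) {k : ℕ}
    (hk : k ≤ ns.length) :
    run (ns.take k) x = x + ∑ j ∈ Finset.range k, (ns.getI j).field (run (ns.take j) x) := by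
  induction k with
  | zero => simp [run]
  | succ k ih =>
    have hk' : k < ns.length := hk
    rw [Finset.sum_range_succ, ← add_assoc, ← ih hk'.le, List.getI_eq_getElem _ hk',
      List.take_add_one, List.getElem?_eq_getElem hk', Option.toList_some]
    simp only [run, List.foldl_append, List.foldl_cons, List.foldl_nil, step]

end Neuron

theorem exists_isFlowNODE_run {d : ℕ} (p : Fin d) {T : ℝ} (hT : 0 < T) {ns : List (Neuron d)}
    (hns : ns ≠ []) (horth : ∀ n ∈ ns, ⟪n.a, n.w⟫ = 0) :
    ∃ (A W : ℝ → Matrix (Fin d) (Fin d) ℝ) (b : ℝ → EuclideanSpace ℝ (Fin d)) (S : Finset ℝ),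
      PCOn A T S ∧ PCOn W T S ∧ PCOn b T S ∧ IsFlowNODE A W b T S (Neuron.run ns) := by
  set K := ns.length
  have hK : (0 : ℝ) < K := by exact_mod_cast List.length_pos_iff.2 hns
  set τ := T / K
  have hτ : 0 < τ := div_pos hT hK
  have hTK : T = K * τ := (mul_div_cancel₀ T hK.ne').symm
  -- each neuron is run for time `τ`, hence the factor `τ⁻¹` in `W`
  refine ⟨fun t => rowMatrix p (ns.getI ⌊t / τ⌋₊).a,
    fun t => colMatrix p (τ⁻¹ • (ns.getI ⌊t / τ⌋₊).w),
    fun t => EuclideanSpace.single p (ns.getI ⌊t / τ⌋₊).β, gridPoints τ K, ?_, ?_, ?_, ?_⟩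
  · rw [hTK]; exact pcOn_comp_floor hτ fun k => rowMatrix p (ns.getI k).a
  · rw [hTK]; exact pcOn_comp_floor hτ fun k => colMatrix p (τ⁻¹ • (ns.getI k).w)
  · rw [hTK]; exact pcOn_comp_floor hτ fun k => EuclideanSpace.single p (ns.getI k).β
  intro x₀
  set u : ℕ → EuclideanSpace ℝ (Fin d) := fun k => (ns.getI k).field (Neuron.run (ns.take k) x₀)
  have hvertex : ∀ k ≤ K, x₀ + ∑ j ∈ Finset.range k, u j = Neuron.run (ns.take k) x₀ :=
    fun k hk => (Neuron.run_take ns x₀ hk).symm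
  refine ⟨polygonalPath τ x₀ u K, ⟨(continuous_polygonalPath x₀ u K).continuousOn, ?_⟩, ?_, ?_⟩
  · intro t ht hS
    rw [hTK] at ht
    obtain ⟨hk, hmem⟩ := floor_lt_and_mem_Ioo hτ ht hS
    set k := ⌊t / τ⌋₊
    have horth_k : ⟪(ns.getI k).a, (ns.getI k).w⟫ = 0 :=
      horth _ (List.getI_eq_getElem _ hk ▸ List.getElem_mem hk)
    have hpath :
        polygonalPath τ x₀ u K t = Neuron.run (ns.take k) x₀ + ((t - k * τ) / τ) • u k := by
      rw [polygonalPath_of_mem_Icc x₀ u K hτ hk (Ioo_subset_Icc_self hmem), hvertex k hk.le]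
    have hfield : (ns.getI k).field (polygonalPath τ x₀ u K t) = u k := by
      rw [hpath, Neuron.field_add_of_inner_eq_zero _
        (by rw [inner_smul_right, Neuron.inner_field_eq_zero horth_k, mul_zero])]
    rw [Neuron.mvec_colMatrix_reluVec, hfield]
    exact (hasDerivAt_polygonalPath x₀ u K hτ hk hmem).hasDerivWithinAt
  · simpa using polygonalPath_natCast_mul x₀ u K hτ (Nat.zero_le K)
  · rw [hTK, polygonalPath_natCast_mul x₀ u K hτ le_rfl, hvertex K le_rfl, List.take_length]

lemma finite_setOf_sum_mul_pow_eq_zero {ι : Type*} [Fintype ι] {e : ι → ℕ}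
    (he : Function.Injective e) {v : ι → ℝ} (hv : v ≠ 0) :
    {t : ℝ | ∑ k, v k * t ^ e k = 0}.Finite := by
  open Polynomial in
  set P : ℝ[X] := ∑ k, C (v k) * X ^ e k
  have hcoeff : ∀ k, P.coeff (e k) = v k := by
    intro k
    rw [finsetSum_coeff, Finset.sum_eq_single k (fun j _ hj => by simp [he.ne hj.symm])
      (by simp)]
    simp
  obtain ⟨k, hk⟩ := Function.ne_iff.1 hv
  have hP : P ≠ 0 := fun h => hk (by rw [← hcoeff, h, coeff_zero, Pi.zero_apply])
  refine (finite_setOfPred_isRoot hP).subset fun t ht => ?_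
  simpa [P, eval_finsetSum] using ht

lemma exists_inner_injective {d : ℕ} (q : Fin d) {ι : Type*} [Finite ι]
    {x : ι → EuclideanSpace ℝ (Fin d)} (hx : Function.Injective x) :
    ∃ c : EuclideanSpace ℝ (Fin d), c q = 1 ∧ Function.Injective fun i => ⟪c, x i⟫ := by
  have := Fintype.ofFinite ι
  set e : Fin d → ℕ := fun k => if k = q then 0 else k + 1
  have he : Function.Injective e := by
    intro k k' h
    simp only [e] at h
    split_ifs at h with hk hk' hk' <;> first | exact hk.trans hk'.symm | omega
  set bad := ⋃ ij : {ij : ι × ι // ij.1 ≠ ij.2},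
    {t : ℝ | ∑ k, (x ij.1.1 - x ij.1.2) k * t ^ e k = 0}
  have hbad : bad.Finite := Set.finite_iUnion fun ij =>
    finite_setOf_sum_mul_pow_eq_zero he fun h => ij.2 <| hx <| sub_eq_zero.1 <| by
      ext k; exact congrFun h k
  obtain ⟨t, ht⟩ := hbad.exists_notMem
  refine ⟨WithLp.toLp 2 fun k => t ^ e k, by simp [e], fun i j hij => ?_⟩
  by_contra hne
  refine ht (Set.mem_iUnion.2 ⟨⟨(i, j), hne⟩, ?_⟩)
  have h : ⟪WithLp.toLp 2 (fun k => t ^ e k), x i - x j⟫ = 0 := by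
    rw [inner_sub_right, sub_eq_zero]; exact hij
  simpa [PiLp.inner_apply, mul_comm] using h

lemma exists_pos_le_abs_sub {ι : Type*} [Finite ι] {f : ι → ℝ} (hf : Function.Injective f) :
    ∃ δ > 0, ∀ i j, i ≠ j → δ ≤ |f i - f j| := by
  rcases isEmpty_or_nonempty {ij : ι × ι // ij.1 ≠ ij.2} with h | h
  · exact ⟨1, one_pos, fun i j hij => (h.false ⟨(i, j), hij⟩).elim⟩
  · obtain ⟨m, hm⟩ :=
      Finite.exists_min fun ij : {ij : ι × ι // ij.1 ≠ ij.2} => |f ij.1.1 - f ij.1.2|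
    exact ⟨_, abs_pos.2 (sub_ne_zero.2 (hf.ne m.2)), fun i j hij => hm ⟨(i, j), hij⟩⟩

def hat (δ z : ℝ) : ℝ :=
  max (z + δ) 0 - 2 * max z 0 + max (z - δ) 0

lemma hat_zero {δ : ℝ} (hδ : 0 ≤ δ) : hat δ 0 = δ := by
  simp [hat, hδ]

lemma hat_eq_zero_of_le_abs {δ z : ℝ} (hδ : 0 ≤ δ) (h : δ ≤ |z|) : hat δ z = 0 := by
  rcases le_abs'.1 h with h | h
  · rw [hat, max_eq_right (by linarith), max_eq_right (by linarith), max_eq_right (by linarith)]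
    ring
  · rw [hat, max_eq_left (by linarith), max_eq_left (by linarith), max_eq_left (by linarith)]
    ring

namespace Neuron

variable {d : ℕ}

lemma run_eq_add_sum_field (L : List (Neuron d)) (hL : ∀ n ∈ L, ∀ m ∈ L, ⟪n.a, m.w⟫ = 0)
    (y : EuclideanSpace ℝ (Fin d)) : run L y = y + (L.map (·.field y)).sum := by
  induction L generalizing y with
  | nil => simp [run]
  | cons n L ih =>
    have hfield : ∀ m ∈ L, m.field (n.step y) = m.field y := fun m hm =>
      m.field_add_of_inner_eq_zero
        (inner_field_eq_zero (hL m (List.mem_cons_of_mem _ hm) n List.mem_cons_self) y) y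
    have hL' : ∀ n ∈ L, ∀ m ∈ L, ⟪n.a, m.w⟫ = 0 := fun n hn m hm =>
      hL n (List.mem_cons_of_mem _ hn) m (List.mem_cons_of_mem _ hm)
    rw [run_cons, ih hL', List.map_congr_left hfield, step, List.map_cons, List.sum_cons, add_assoc]

def readout (p q : Fin d) (s β : ℝ) : Neuron d :=
  ⟨EuclideanSpace.single q 1, EuclideanSpace.single p s, β⟩

lemma inner_readout_a_w {p q : Fin d} (hpq : p ≠ q) (s β s' β' : ℝ) :
    ⟪(readout p q s β).a, (readout p q s' β').w⟫ = 0 := by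
  simp [readout, EuclideanSpace.inner_single_left, hpq]

def hatNeurons (p q : Fin d) (s ℓ δ : ℝ) : List (Neuron d) :=
  [readout p q s (δ - ℓ), readout p q (-2 * s) (-ℓ), readout p q s (-δ - ℓ)]

lemma sum_map_field_hatNeurons (p q : Fin d) (s ℓ δ : ℝ) (y : EuclideanSpace ℝ (Fin d)) :
    ((hatNeurons p q s ℓ δ).map (·.field y)).sum
      = EuclideanSpace.single p (s * hat δ (y q - ℓ)) := by
  ext k
  by_cases hk : k = p
  · subst hk
    simp [hatNeurons, readout, field, hat, EuclideanSpace.inner_single_left]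
    ring_nf
  · simp [hatNeurons, readout, field, hk]

def hatLayer (p q : Fin d) {ι : Type*} [Fintype ι] (s ℓ : ι → ℝ) (δ : ℝ) : List (Neuron d) :=
  Finset.univ.toList.flatMap fun j => hatNeurons p q (s j) (ℓ j) δ

section HatLayer

variable {p q : Fin d} {ι : Type*} [Fintype ι] (s ℓ : ι → ℝ) (δ : ℝ)

lemma inner_a_w_of_mem_hatLayer (hpq : p ≠ q) :
    ∀ n ∈ hatLayer p q s ℓ δ, ∀ n' ∈ hatLayer p q s ℓ δ, ⟪n.a, n'.w⟫ = 0 := by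
  have hreadout : ∀ n ∈ hatLayer p q s ℓ δ, ∃ s β, n = readout p q s β := by
    simp only [hatLayer, hatNeurons, List.mem_flatMap, List.mem_cons, List.not_mem_nil, or_false]
    rintro n ⟨j, -, rfl | rfl | rfl⟩ <;> exact ⟨_, _, rfl⟩
  intro n hn n' hn'
  obtain ⟨s, β, rfl⟩ := hreadout n hn
  obtain ⟨s', β', rfl⟩ := hreadout n' hn'
  exact inner_readout_a_w hpq s β s' β'

lemma run_hatLayer_apply (hpq : p ≠ q) (y : EuclideanSpace ℝ (Fin d)) :
    run (hatLayer p q s ℓ δ) y p = y p + ∑ j, s j * hat δ (y q - ℓ j) := by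
  rw [run_eq_add_sum_field _ (inner_a_w_of_mem_hatLayer s ℓ δ hpq)]
  simp [hatLayer, List.flatMap_def, List.sum_flatten, sum_map_field_hatNeurons]

end HatLayer

def lift (q : Fin d) (c : EuclideanSpace ℝ (Fin d)) (β : ℝ) : Neuron d :=
  ⟨c - EuclideanSpace.single q 1, EuclideanSpace.single q 1, β⟩

lemma inner_lift_a_w {q : Fin d} {c : EuclideanSpace ℝ (Fin d)} (hc : c q = 1) (β : ℝ) :
    ⟪(lift q c β).a, (lift q c β).w⟫ = 0 := by
  simp [lift, inner_sub_left, EuclideanSpace.inner_single_right, hc]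

lemma lift_step_apply (q : Fin d) (c : EuclideanSpace ℝ (Fin d)) {β : ℝ}
    {x : EuclideanSpace ℝ (Fin d)} (hx : 0 < ⟪c - EuclideanSpace.single q 1, x⟫ + β) (k : Fin d) :
    (lift q c β).step x k = if k = q then ⟪c, x⟫ + β else x k := by
  simp only [step, field, lift]
  rw [max_eq_left hx.le]
  by_cases hk : k = q
  · subst hk
    simp [inner_sub_left, EuclideanSpace.inner_single_left]
    ring
  · simp [hk]

end Neuron

open Neuron in
theorem exists_run_apply_eq {d : ℕ} {p q : Fin d} (hpq : p ≠ q) {ι : Type*} [Fintype ι]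
    {x : ι → EuclideanSpace ℝ (Fin d)} (hx : Function.Injective x) (tgt : ι → ℝ) :
    ∃ ns : List (Neuron d), ns ≠ [] ∧ (∀ n ∈ ns, ⟪n.a, n.w⟫ = 0) ∧ ∀ i, run ns (x i) p = tgt i := by
  obtain ⟨c, hcq, hc⟩ := exists_inner_injective q hx
  obtain ⟨m, hm⟩ := (Set.finite_range fun i => ⟪c - EuclideanSpace.single q 1, x i⟫).bddBelow
  have hpos : ∀ i, 0 < ⟪c - EuclideanSpace.single q 1, x i⟫ + (1 - m) := fun i => by
    linarith [hm ⟨i, rfl⟩]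
  set ℓ : ι → ℝ := fun i => ⟪c, x i⟫ + (1 - m)
  obtain ⟨δ, hδ, hsep⟩ :=
    exists_pos_le_abs_sub (f := ℓ) fun i j h => hc (add_right_cancel h)
  set s : ι → ℝ := fun j => (tgt j - x j p) / δ
  refine ⟨lift q c (1 - m) :: hatLayer p q s ℓ δ, List.cons_ne_nil _ _, ?_, fun i => ?_⟩
  · intro n hn
    rcases List.mem_cons.1 hn with rfl | hn
    · exact inner_lift_a_w hcq _
    · exact inner_a_w_of_mem_hatLayer s ℓ δ hpq n hn n hn
  have hother : ∀ j ∈ Finset.univ, j ≠ i → s j * hat δ (ℓ i - ℓ j) = 0 := fun j _ hj => by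
    rw [hat_eq_zero_of_le_abs hδ.le (hsep i j hj.symm), mul_zero]
  rw [run_cons, run_hatLayer_apply s ℓ δ hpq, lift_step_apply q c (hpos i),
    lift_step_apply q c (hpos i), if_neg hpq, if_pos rfl, Finset.sum_eq_single i hother (by simp),
    sub_self, hat_zero hδ.le, div_mul_cancel₀ _ hδ.ne']
  ring

lemma exists_mem_strip {M : ℕ} {α : ℕ → ℝ} (hα : ∀ j, j + 1 ≤ M - 2 → α j < α (j + 1)) (m : ℕ) :
    ∃ t, (0 < m → α (m - 1) < t) ∧ (m < M - 1 → t ≤ α m) := by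
  by_cases hm : m < M - 1
  · refine ⟨α m, fun hm₀ => ?_, fun _ => le_rfl⟩
    simpa [Nat.sub_add_cancel hm₀] using hα (m - 1) (by omega)
  · exact ⟨α (m - 1) + 1, fun _ => lt_add_one _, fun h => (hm h).elim⟩

/-- **Classification by strips** (Theorem 1 of the paper).
Given pairwise distinct data in `ℝ^d` (`d ≥ 2`) with labels taking `M ≥ 2` distinct
values, and cut points `α 0 < α 1 < ⋯ < α (M-2)` defining `M` parallel strips,
there are piecewise constant controls whose neural-ODE flow sends each datum into
the strip of its label.  The strip of index `m` is
`{x : (0 < m → α (m-1) < x⁽¹⁾) ∧ (m < M-1 → x⁽¹⁾ ≤ α m)}`. -/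
theorem classification_in_strips
    (d M N : ℕ) (hd : 2 ≤ d) (T : ℝ) (hT : 0 < T)
    (x : Fin N → EuclideanSpace ℝ (Fin d))
    (hx : Function.Injective x)
    (lab : Fin N → Fin M)
    (α : ℕ → ℝ) (hα : ∀ j, j + 1 ≤ M - 2 → α j < α (j + 1)) :
    ∃ (A W : ℝ → Matrix (Fin d) (Fin d) ℝ) (b : ℝ → EuclideanSpace ℝ (Fin d))
      (S : Finset ℝ),
      PCOn A T S ∧ PCOn W T S ∧ PCOn b T S ∧
      ∃ X : Fin N → ℝ → EuclideanSpace ℝ (Fin d),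
        (∀ i, SolvesNODE A W b T S (X i)) ∧
        (∀ i, X i 0 = x i) ∧
        (∀ i, (0 < (lab i).val → α ((lab i).val - 1) < X i T ⟨0, by omega⟩) ∧
              ((lab i).val < M - 1 → X i T ⟨0, by omega⟩ ≤ α (lab i).val)) := by
  choose tgt htgt using fun i => exists_mem_strip hα (lab i).val
  obtain ⟨ns, hne, horth, hrun⟩ :=
    exists_run_apply_eq (p := ⟨0, by omega⟩) (q := ⟨1, by omega⟩) (by simp) hx tgt
  obtain ⟨A, W, b, S, hA, hW, hb, hflow⟩ := exists_isFlowNODE_run ⟨0, by omega⟩ hT hne horth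
  choose X hX hX0 hXT using fun i => hflow (x i)
  refine ⟨A, W, b, S, hA, hW, hb, X, hX, hX0, fun i => ?_⟩
  rw [hXT, hrun]
  exact htgt i
end
end

section
/- Let d ≥ 2, T > 0. Let {x_i}_{i=1}^N ⊂ ℝ^d be pairwise distinct points, let O_1, …, O_M ⊂ ℝ^d be pairwise disjoint nonempty open sets, and let m : {1,…,N} → {1,…,M} be any label assignment. Then there exist piecewise constant controls A, W : [0,T] → ℝ^{d×d} and b : [0,T] → ℝ^d such that for every i ∈ {1,…,N} the flow of the Neural ODE satisfies φ_T(x_i; A, W, b) ∈ O_{m(i)}. -/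
/-! A shear `z ↦ z + max (⟪n, z⟫ + β) 0 • u` with `u ⊥ n` preserves `⟪n, ·⟫`, so it is the time-`T`
flow of the neural ODE with constant rank-one controls, and concatenating controls in time
composes flows. If points have distinct levels `⟪a, ·⟫`, shears with normal `a`, applied from the
lowest level upwards, move each point to any prescribed target at the same level. Take `a`
separating the `x i`, a nonzero `c ⊥ a` (it exists as `d ≥ 2`), and targets `y i ∈ O (lab i)`
separated by `c`; two such rounds, along `a` and then along `c`, through the points `w i` with
`⟪a, w i⟫ = ⟪a, x i⟫` and `⟪c, w i⟫ = ⟪c, y i⟫`, carry each `x i` exactly to `y i`. -/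

open MeasureTheory Set

noncomputable section

open Function Filter Topology
open scoped RealInnerProductSpace

section Shear

variable {E : Type*} [NormedAddCommGroup E] [InnerProductSpace ℝ E]

def reluShear (n u : E) (β : ℝ) : Function.End E := fun z => z + max (⟪n, z⟫ + β) 0 • u

variable {n u : E} {β : ℝ}

lemma inner_reluShear (hnu : ⟪n, u⟫ = 0) (z : E) : ⟪n, reluShear n u β z⟫ = ⟪n, z⟫ := by
  simp [reluShear, inner_add_right, inner_smul_right, hnu]

lemma reluShear_of_nonpos {z : E} (h : ⟪n, z⟫ + β ≤ 0) : reluShear n u β z = z := by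
  simp [reluShear, max_eq_right h]

lemma reluShear_of_nonneg {z : E} (h : 0 ≤ ⟪n, z⟫ + β) :
    reluShear n u β z = z + (⟪n, z⟫ + β) • u := by
  rw [reluShear, max_eq_left h]

@[simp] lemma reluShear_zero_right (n : E) (β : ℝ) : reluShear n 0 β = 1 :=
  funext fun z => by simp [reluShear]; rfl

variable (E) in
def reluShears : Set (Function.End E) := {f | ∃ n u β, ⟪n, u⟫ = 0 ∧ f = reluShear n u β}

lemma reluShear_mem_closure (hnu : ⟪n, u⟫ = 0) (β : ℝ) :
    reluShear n u β ∈ Submonoid.closure (reluShears E) :=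
  Submonoid.subset_closure ⟨n, u, β, hnu, rfl⟩

/-- Points are placed from the lowest level upwards: the shear placing the lowest point is
inactive at the lower levels, where the points placed before it lie. -/
lemma exists_mem_closure_reluShears_fixing_le {ι : Type*} [DecidableEq ι] (a : E) {ℓ : ι → ℝ}
    (hℓ : Injective ℓ) {w : ι → E} (hw : ∀ i, ⟪a, w i⟫ = ℓ i) (s : Finset ι) :
    ∀ (q : ι → E) (ρ : ℝ), (∀ i ∈ s, ⟪a, q i⟫ = ℓ i) → (∀ i ∈ s, ρ < ℓ i) →
      ∃ Φ ∈ Submonoid.closure (reluShears E),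
        (∀ i ∈ s, Φ (q i) = w i) ∧ ∀ z, ⟪a, z⟫ ≤ ρ → Φ z = z := by
  induction s using Finset.induction_on_min_value ℓ with
  | empty => exact fun q ρ _ _ => ⟨1, one_mem _, by simp, fun z _ => rfl⟩
  | insert i s hi hmin ih =>
    intro q ρ hq hρ
    have hqi : ⟪a, q i⟫ = ℓ i := hq i (s.mem_insert_self i)
    have hρi : ρ < ℓ i := hρ i (s.mem_insert_self i)
    obtain ⟨θ, hρθ, hθ⟩ := exists_between hρi
    set u := (ℓ i - θ)⁻¹ • (w i - q i)
    have hau : ⟪a, u⟫ = 0 := by simp [u, inner_smul_right, inner_sub_right, hw, hqi]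
    have hσi : reluShear a u (-θ) (q i) = w i := by
      rw [reluShear_of_nonneg (by linarith), hqi, ← sub_eq_add_neg, smul_inv_smul₀ (by linarith)]
      abel
    obtain ⟨Φ, hΦ, hΦs, hΦfix⟩ := ih (fun j => reluShear a u (-θ) (q j)) (ℓ i)
      (fun j hj => by rw [inner_reluShear hau, hq j (Finset.mem_insert_of_mem hj)])
      (fun j hj => (hmin j hj).lt_of_ne (hℓ.ne (ne_of_mem_of_not_mem hj hi).symm))
    refine ⟨Φ * reluShear a u (-θ), mul_mem hΦ (reluShear_mem_closure hau _), ?_, fun z hz => ?_⟩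
    · intro j hj
      rcases Finset.mem_insert.1 hj with rfl | hj
      · exact (congrArg Φ hσi).trans (hΦfix _ (hw j).le)
      · exact hΦs j hj
    · change Φ (reluShear a u (-θ) z) = z
      rw [reluShear_of_nonpos (by linarith), hΦfix z (by linarith)]

lemma exists_mem_closure_reluShears_of_inner_eq {ι : Type*} [Finite ι] (a : E) {p w : ι → E}
    (hp : Injective fun i => ⟪a, p i⟫) (hw : ∀ i, ⟪a, w i⟫ = ⟪a, p i⟫) :
    ∃ Φ ∈ Submonoid.closure (reluShears E), ∀ i, Φ (p i) = w i := by
  classical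
  cases nonempty_fintype ι
  obtain ⟨m, hm⟩ := (Set.finite_range fun i => ⟪a, p i⟫).bddBelow
  obtain ⟨Φ, hΦ, hpw, -⟩ := exists_mem_closure_reluShears_fixing_le a hp hw Finset.univ p
    (m - 1) (fun i _ => rfl) (fun i _ => by linarith [hm (Set.mem_range_self i)])
  exact ⟨Φ, hΦ, fun i => hpw i (Finset.mem_univ i)⟩

lemma exists_mem_closure_reluShears_of_orthogonal {ι : Type*} [Finite ι] {a c : E}
    (hac : ⟪a, c⟫ = 0) (hc : c ≠ 0) {x y : ι → E} (hx : Injective fun i => ⟪a, x i⟫)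
    (hy : Injective fun i => ⟪c, y i⟫) :
    ∃ Φ ∈ Submonoid.closure (reluShears E), ∀ i, Φ (x i) = y i := by
  have hcc : ⟪c, c⟫ ≠ 0 := inner_self_ne_zero.2 hc
  set w := fun i => x i + ((⟪c, y i⟫ - ⟪c, x i⟫) / ⟪c, c⟫) • c
  have hwa : ∀ i, ⟪a, w i⟫ = ⟪a, x i⟫ := fun i => by
    simp [w, inner_add_right, inner_smul_right, hac]
  have hwc : ∀ i, ⟪c, w i⟫ = ⟪c, y i⟫ := fun i => by
    simp only [w, inner_add_right, inner_smul_right]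
    field_simp
    ring
  obtain ⟨Φ₁, hΦ₁, hxw⟩ := exists_mem_closure_reluShears_of_inner_eq a hx hwa
  obtain ⟨Φ₂, hΦ₂, hwy⟩ := exists_mem_closure_reluShears_of_inner_eq c
    (p := w) (by simpa only [hwc] using hy) fun i => (hwc i).symm
  exact ⟨Φ₂ * Φ₁, mul_mem hΦ₂ hΦ₁, fun i => (congrArg Φ₂ (hxw i)).trans (hwy i)⟩

end Shear

section Genericity

variable {E : Type*} [NormedAddCommGroup E] [InnerProductSpace ℝ E]

/-- A real vector space is not a finite union of the proper hyperplanes `(x i - x j)ᗮ`. -/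
lemma exists_inner_injective_s1 {ι : Type*} [Finite ι] {x : ι → E} (hx : Injective x) :
    ∃ a : E, Injective fun i => ⟪a, x i⟫ := by
  by_contra! h
  obtain ⟨⟨⟨i, j⟩, hij⟩, htop⟩ := Subspace.exists_eq_top_of_iUnion_eq_univ
    (p := fun ij : {ij : ι × ι // ij.1 ≠ ij.2} => (ℝ ∙ (x ij.1.1 - x ij.1.2))ᗮ) <| by
      refine eq_univ_of_forall fun a => ?_
      obtain ⟨i, j, hij, hne⟩ := not_injective_iff.1 (h a)
      refine mem_iUnion.2 ⟨⟨(i, j), hne⟩, Submodule.mem_orthogonal_singleton_iff_inner_right.2 ?_⟩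
      rw [inner_sub_left, real_inner_comm, real_inner_comm a, hij, sub_self]
  rw [Submodule.orthogonal_eq_top_iff, Submodule.span_singleton_eq_bot, sub_eq_zero] at htop
  exact hij (hx htop)

lemma exists_ne_zero_inner_eq_zero [FiniteDimensional ℝ E] (hE : 2 ≤ Module.finrank ℝ E)
    (a : E) : ∃ c ≠ 0, ⟪a, c⟫ = 0 := by
  have hsum := (ℝ ∙ a).finrank_add_finrank_orthogonal
  have hspan : Module.finrank ℝ (ℝ ∙ a) ≤ 1 := by
    simpa using finrank_span_le_card (R := ℝ) ({a} : Set E)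
  obtain ⟨c, hc, hc0⟩ := Submodule.exists_mem_ne_zero_of_ne_bot (p := (ℝ ∙ a)ᗮ) <| by
    intro hbot
    rw [hbot, finrank_bot] at hsum
    omega
  exact ⟨c, hc0, Submodule.mem_orthogonal_singleton_iff_inner_right.1 hc⟩

lemma exists_mem_inner_notMem {c : E} (hc : c ≠ 0) {U : Set E} (hU : IsOpen U)
    (hne : U.Nonempty) {F : Set ℝ} (hF : F.Finite) : ∃ y ∈ U, ⟪c, y⟫ ∉ F := by
  obtain ⟨z, hz⟩ := hne
  have hline : {t : ℝ | z + t • c ∈ U} ∈ 𝓝 0 :=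
    (continuous_const.add (continuous_id.smul continuous_const)).continuousAt.preimage_mem_nhds
      (by simpa using hU.mem_nhds hz)
  have hbad : {t : ℝ | ⟪c, z + t • c⟫ ∈ F}.Finite := by
    refine hF.preimage (Injective.injOn fun s t hst => ?_)
    simpa [inner_add_right, inner_smul_right, hc] using hst
  obtain ⟨t, htU, htF⟩ := ((infinite_of_mem_nhds 0 hline).sdiff hbad).nonempty
  exact ⟨_, htU, htF⟩

lemma exists_forall_mem_inner_injective {ι : Type*} [Finite ι] {c : E} (hc : c ≠ 0)
    {U : ι → Set E} (hU : ∀ i, IsOpen (U i)) (hne : ∀ i, (U i).Nonempty) :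
    ∃ y : ι → E, (∀ i, y i ∈ U i) ∧ Injective fun i => ⟪c, y i⟫ := by
  classical
  cases nonempty_fintype ι
  suffices ∀ s : Finset ι, ∃ y : ι → E, (∀ i, y i ∈ U i) ∧ InjOn (fun i => ⟪c, y i⟫) s by
    obtain ⟨y, hyU, hy⟩ := this Finset.univ
    exact ⟨y, hyU, injOn_univ.1 (by simpa using hy)⟩
  intro s
  induction s using Finset.induction_on with
  | empty => exact ⟨fun i => (hne i).some, fun i => (hne i).some_mem, by simp⟩
  | insert i s hi ih =>
    obtain ⟨y, hyU, hy⟩ := ih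
    obtain ⟨v, hvU, hv⟩ := exists_mem_inner_notMem hc (hU i) (hne i)
      ((s.finite_toSet).image fun j => ⟪c, y j⟫)
    have hEq : EqOn (fun j => ⟪c, update y i v j⟫) (fun j => ⟪c, y j⟫) s := fun j hj => by
      simp [update_of_ne (ne_of_mem_of_not_mem hj hi)]
    refine ⟨update y i v, fun j => ?_, ?_⟩
    · rcases eq_or_ne j i with rfl | hj
      · simpa using hvU
      · simpa [update_of_ne hj] using hyU j
    · rw [Finset.coe_insert, injOn_insert (by simpa using hi), hEq.image_eq]
      exact ⟨hy.congr hEq.symm, by simpa using hv⟩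

end Genericity

section Concat

variable {α : Type*}

def concatAt (T₁ : ℝ) (f g : ℝ → α) (t : ℝ) : α :=
  if t < T₁ then f t else g (t - T₁)

def concatSwitch (T₁ : ℝ) (S₁ S₂ : Finset ℝ) : Finset ℝ :=
  S₁ ∪ {T₁} ∪ S₂.image (· + T₁)

variable {T₁ T₂ t : ℝ} {f g : ℝ → α}

lemma concatAt_of_lt (h : t < T₁) : concatAt T₁ f g t = f t := if_pos h

lemma concatAt_of_le (h : T₁ ≤ t) : concatAt T₁ f g t = g (t - T₁) := if_neg (not_lt.2 h)

lemma pcOn_const (a : α) (T : ℝ) (S : Finset ℝ) : PCOn (fun _ => a) T S :=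
  fun _ _ _ _ _ _ => rfl

lemma PCOn.concatAt {S₁ S₂ : Finset ℝ} (hf : PCOn f T₁ S₁) (hg : PCOn g T₂ S₂) :
    PCOn (concatAt T₁ f g) (T₁ + T₂) (concatSwitch T₁ S₁ S₂) := by
  intro t₁ ht₁ t₂ ht₂ hle hS
  have hS₁ : ∀ s ∈ S₁, s ∉ Ioc t₁ t₂ := fun s hs => hS s (by simp [concatSwitch, hs])
  have hT₁ : T₁ ∉ Ioc t₁ t₂ := hS T₁ (by simp [concatSwitch])
  have hS₂ : ∀ s ∈ S₂, s ∉ Ioc (t₁ - T₁) (t₂ - T₁) := fun s hs hmem =>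
    hS (s + T₁) (by simp [concatSwitch, hs]) ⟨by linarith [hmem.1], by linarith [hmem.2]⟩
  simp only [mem_Ioc, not_and, not_le] at hT₁
  by_cases h₂ : t₂ < T₁
  · have h₁ : t₁ < T₁ := hle.trans_lt h₂
    rw [concatAt_of_lt h₁, concatAt_of_lt h₂]
    exact hf t₁ ⟨ht₁.1, h₁.le⟩ t₂ ⟨ht₂.1, h₂.le⟩ hle hS₁
  · have h₁ : T₁ ≤ t₁ := not_lt.1 fun h₁ => h₂ (hT₁ h₁)
    rw [concatAt_of_le h₁, concatAt_of_le (h₁.trans hle)]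
    exact hg _ ⟨by linarith, by linarith [ht₁.2]⟩ _ ⟨by linarith, by linarith [ht₂.2]⟩
      (by linarith) hS₂

lemma mapsTo_sub_const_Icc (T₁ T₂ : ℝ) : MapsTo (· - T₁) (Icc T₁ (T₁ + T₂)) (Icc 0 T₂) :=
  fun t ht => ⟨by linarith [ht.1], by linarith [ht.2]⟩

lemma ContinuousOn.concatAt [TopologicalSpace α] (hf : ContinuousOn f (Icc 0 T₁))
    (hg : ContinuousOn g (Icc 0 T₂)) (hfg : g 0 = f T₁) (hT₁ : 0 ≤ T₁) (hT₂ : 0 ≤ T₂) :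
    ContinuousOn (concatAt T₁ f g) (Icc 0 (T₁ + T₂)) := by
  have hleft : EqOn (_root_.concatAt T₁ f g) f (Icc 0 T₁) := fun t ht => by
    rcases ht.2.lt_or_eq with h | rfl
    · exact concatAt_of_lt h
    · rw [concatAt_of_le le_rfl, sub_self, hfg]
  have hright : EqOn (_root_.concatAt T₁ f g) (fun t => g (t - T₁)) (Icc T₁ (T₁ + T₂)) :=
    fun t ht => concatAt_of_le ht.1
  rw [← Icc_union_Icc_eq_Icc hT₁ (by linarith)]
  have hg' := hg.comp (continuousOn_id.sub continuousOn_const) (mapsTo_sub_const_Icc T₁ T₂)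
  exact (hf.congr hleft).union_of_isClosed (hg'.congr hright) isClosed_Icc isClosed_Icc

section Deriv

variable {F : Type*} [NormedAddCommGroup F] [NormedSpace ℝ F] {f g : ℝ → F} {v : F}

lemma HasDerivWithinAt.concatAt_left (hf : HasDerivWithinAt f v (Icc 0 T₁) t) (ht : t < T₁)
    (hT₂ : 0 ≤ T₂) : HasDerivWithinAt (concatAt T₁ f g) v (Icc 0 (T₁ + T₂)) t := by
  have hset : Icc 0 (T₁ + T₂) =ᶠ[𝓝 t] Icc 0 T₁ := eventuallyEq_set.2 <| by
    filter_upwards [Iio_mem_nhds ht] with s hs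
    simp only [mem_Icc]
    constructor <;> rintro ⟨h0, -⟩ <;> exact ⟨h0, by linarith [mem_Iio.1 hs]⟩
  have hfun : _root_.concatAt T₁ f g =ᶠ[𝓝 t] f := by
    filter_upwards [Iio_mem_nhds ht] with s hs using concatAt_of_lt hs
  exact ((hasDerivWithinAt_congr_set hset).2 hf).congr_of_eventuallyEq
    (nhdsWithin_le_nhds hfun) hfun.eq_of_nhds

lemma HasDerivWithinAt.concatAt_right (hg : HasDerivWithinAt g v (Icc 0 T₂) (t - T₁))
    (ht : T₁ < t) (hT₁ : 0 ≤ T₁) : HasDerivWithinAt (concatAt T₁ f g) v (Icc 0 (T₁ + T₂)) t := by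
  have hshift := (hg.scomp t ((hasDerivAt_id' t).sub_const T₁).hasDerivWithinAt
    (mapsTo_sub_const_Icc T₁ T₂)).congr_deriv (one_smul ℝ v)
  have hset : Icc 0 (T₁ + T₂) =ᶠ[𝓝 t] Icc T₁ (T₁ + T₂) := eventuallyEq_set.2 <| by
    filter_upwards [Ioi_mem_nhds ht] with s hs
    simp only [mem_Icc]
    constructor <;> rintro ⟨-, h1⟩ <;> exact ⟨by linarith [mem_Ioi.1 hs], h1⟩
  have hfun : _root_.concatAt T₁ f g =ᶠ[𝓝 t] fun s => g (s - T₁) := by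
    filter_upwards [Ioi_mem_nhds ht] with s hs using concatAt_of_le (mem_Ioi.1 hs).le
  exact ((hasDerivWithinAt_congr_set hset).2 hshift).congr_of_eventuallyEq
    (nhdsWithin_le_nhds hfun) hfun.eq_of_nhds

end Deriv

end Concat

section Realization

variable {d : ℕ}

local notation "E" => EuclideanSpace ℝ (Fin d)

lemma mvec_reluVec_rankOne [NeZero d] (n u : E) (β : ℝ) (z : E) :
    mvec (Matrix.of fun i j => if j = 0 then u i else 0)
        (reluVec (mvec (Matrix.of fun _ j => n j) z + WithLp.toLp 2 fun _ => β)) =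
      max (⟪n, z⟫ + β) 0 • u := by
  ext i
  simp [mvec, reluVec, PiLp.inner_apply, mul_comm]

def IsPCFlow (T : ℝ) (Φ : E → E) : Prop :=
  ∃ (A W : ℝ → Matrix (Fin d) (Fin d) ℝ) (b : ℝ → E) (S : Finset ℝ),
    PCOn A T S ∧ PCOn W T S ∧ PCOn b T S ∧ IsFlowNODE A W b T S Φ

/-- `⟪n, ·⟫` is constant along the flow, so each trajectory is the segment from `z` to the
image of `z`, run at constant speed. -/
lemma isPCFlow_reluShear [NeZero d] {T : ℝ} (hT : 0 < T) {n u : E} (hnu : ⟪n, u⟫ = 0)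
    (β : ℝ) : IsPCFlow T (reluShear n u β) := by
  refine ⟨fun _ => Matrix.of fun _ j => n j,
    fun _ => Matrix.of fun i j => if j = 0 then T⁻¹ * u i else 0, fun _ => WithLp.toLp 2 fun _ => β,
    ∅, pcOn_const _ _ _, pcOn_const _ _ _, pcOn_const _ _ _, fun z => ?_⟩
  set v := max (⟪n, z⟫ + β) 0 • u
  have hnv : ⟪n, v⟫ = 0 := by simp [v, inner_smul_right, hnu]
  refine ⟨fun t => z + (t / T) • v, ⟨by fun_prop, fun t _ _ => ?_⟩, by simp, ?_⟩
  · have := mvec_reluVec_rankOne n (T⁻¹ • u) β (z + (t / T) • v)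
    simp only [PiLp.smul_apply, smul_eq_mul] at this
    rw [this, inner_add_right, inner_smul_right, hnv, mul_zero, add_zero, smul_comm]
    simpa [v, one_div] using
      ((((hasDerivAt_id t).div_const T).smul_const v).const_add z).hasDerivWithinAt
  · simp [hT.ne', reluShear, v]

lemma SolvesNODE.concatAt {A₁ A₂ W₁ W₂ : ℝ → Matrix (Fin d) (Fin d) ℝ} {b₁ b₂ X₁ X₂ : ℝ → E}
    {T₁ T₂ : ℝ} {S₁ S₂ : Finset ℝ} (hT₁ : 0 ≤ T₁) (hT₂ : 0 ≤ T₂)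
    (h₁ : SolvesNODE A₁ W₁ b₁ T₁ S₁ X₁) (h₂ : SolvesNODE A₂ W₂ b₂ T₂ S₂ X₂)
    (hX : X₂ 0 = X₁ T₁) :
    SolvesNODE (concatAt T₁ A₁ A₂) (concatAt T₁ W₁ W₂) (concatAt T₁ b₁ b₂) (T₁ + T₂)
      (concatSwitch T₁ S₁ S₂) (concatAt T₁ X₁ X₂) := by
  refine ⟨h₁.1.concatAt h₂.1 hX hT₁ hT₂, fun t ht htS => ?_⟩
  rcases (show t ≠ T₁ by rintro rfl; simp [concatSwitch] at htS).lt_or_gt with hlt | hgt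
  · simp only [concatAt_of_lt hlt]
    exact (h₁.2 t ⟨ht.1, hlt.le⟩ fun h => htS (by simp [concatSwitch, h])).concatAt_left hlt hT₂
  · simp only [concatAt_of_le hgt.le]
    refine (h₂.2 (t - T₁) ⟨by linarith, by linarith [ht.2]⟩ fun h => htS ?_).concatAt_right hgt hT₁
    exact Finset.mem_union_right _ (Finset.mem_image.2 ⟨t - T₁, h, sub_add_cancel t T₁⟩)

lemma IsPCFlow.comp {T₁ T₂ : ℝ} (hT₁ : 0 < T₁) (hT₂ : 0 ≤ T₂) {Φ₁ Φ₂ : E → E}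
    (h₁ : IsPCFlow T₁ Φ₁) (h₂ : IsPCFlow T₂ Φ₂) : IsPCFlow (T₁ + T₂) (Φ₂ ∘ Φ₁) := by
  obtain ⟨A₁, W₁, b₁, S₁, hA₁, hW₁, hb₁, hΦ₁⟩ := h₁
  obtain ⟨A₂, W₂, b₂, S₂, hA₂, hW₂, hb₂, hΦ₂⟩ := h₂
  refine ⟨_, _, _, _, hA₁.concatAt hA₂, hW₁.concatAt hW₂, hb₁.concatAt hb₂, fun p => ?_⟩
  obtain ⟨X₁, hX₁, hX₁0, hX₁T⟩ := hΦ₁ p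
  obtain ⟨X₂, hX₂, hX₂0, hX₂T⟩ := hΦ₂ (Φ₁ p)
  refine ⟨concatAt T₁ X₁ X₂, hX₁.concatAt hT₁.le hT₂ hX₂ (hX₂0.trans hX₁T.symm), ?_, ?_⟩
  · rw [concatAt_of_lt hT₁, hX₁0]
  · rw [concatAt_of_le (by linarith), add_sub_cancel_left, hX₂T, comp_apply]

variable (d) in
def pcFlowMaps [NeZero d] : Submonoid (Function.End E) where
  carrier := {Φ | ∀ T, 0 < T → IsPCFlow T Φ}
  one_mem' T hT := by
    simpa using isPCFlow_reluShear hT (inner_zero_right (0 : E)) 0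
  mul_mem' {Φ Ψ} hΦ hΨ T hT := by
    have h := (hΨ _ (half_pos hT)).comp (half_pos hT) (half_pos hT).le (hΦ _ (half_pos hT))
    rwa [add_halves] at h

lemma closure_reluShears_le_pcFlowMaps [NeZero d] :
    Submonoid.closure (reluShears E) ≤ pcFlowMaps d :=
  Submonoid.closure_le.2 fun _ ⟨_, _, β, hnu, hΦ⟩ _ hT => hΦ ▸ isPCFlow_reluShear hT hnu β

end Realization

theorem classification_open_sets_general
    (d M N : ℕ) (hd : 2 ≤ d) (T : ℝ) (hT : 0 < T)
    (x : Fin N → EuclideanSpace ℝ (Fin d)) (hx : Function.Injective x)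
    (O : Fin M → Set (EuclideanSpace ℝ (Fin d)))
    (hOopen : ∀ m, IsOpen (O m)) (hOne : ∀ m, (O m).Nonempty)
    (lab : Fin N → Fin M) :
    ∃ (A W : ℝ → Matrix (Fin d) (Fin d) ℝ) (b : ℝ → EuclideanSpace ℝ (Fin d))
      (S : Finset ℝ),
      PCOn A T S ∧ PCOn W T S ∧ PCOn b T S ∧
      ∃ X : Fin N → ℝ → EuclideanSpace ℝ (Fin d),
        (∀ i, SolvesNODE A W b T S (X i)) ∧
        (∀ i, X i 0 = x i) ∧
        (∀ i, X i T ∈ O (lab i)) := by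
  have : NeZero d := ⟨by omega⟩
  obtain ⟨a, ha⟩ := exists_inner_injective_s1 hx
  obtain ⟨c, hc, hac⟩ := exists_ne_zero_inner_eq_zero (by simpa using hd) a
  obtain ⟨y, hyO, hy⟩ := exists_forall_mem_inner_injective hc (fun i => hOopen (lab i))
    fun i => hOne (lab i)
  obtain ⟨Φ, hΦ, hxy⟩ := exists_mem_closure_reluShears_of_orthogonal hac hc ha hy
  obtain ⟨A, W, b, S, hA, hW, hb, hflow⟩ := closure_reluShears_le_pcFlowMaps hΦ T hT
  choose X hX hX0 hXT using fun i => hflow (x i)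
  refine ⟨A, W, b, S, hA, hW, hb, X, hX, hX0, fun i => ?_⟩
  rw [hXT i, hxy i]
  exact hyO i

/-- **Classification into arbitrary disjoint open sets.**
Given pairwise distinct points in `ℝ^d` (`d ≥ 2`), pairwise disjoint nonempty
open sets `O 1, …, O M` and any label assignment, there are piecewise constant
controls whose neural-ODE flow sends each point into the open set of its label. -/
theorem classification_open_sets
    (d M N : ℕ) (hd : 2 ≤ d) (T : ℝ) (hT : 0 < T)
    (x : Fin N → EuclideanSpace ℝ (Fin d)) (hx : Function.Injective x)
    (O : Fin M → Set (EuclideanSpace ℝ (Fin d)))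
    (hOopen : ∀ m, IsOpen (O m)) (hOne : ∀ m, (O m).Nonempty)
    (hOdisj : ∀ m m', m ≠ m' → Disjoint (O m) (O m'))
    (lab : Fin N → Fin M) :
    ∃ (A W : ℝ → Matrix (Fin d) (Fin d) ℝ) (b : ℝ → EuclideanSpace ℝ (Fin d))
      (S : Finset ℝ),
      PCOn A T S ∧ PCOn W T S ∧ PCOn b T S ∧
      ∃ X : Fin N → ℝ → EuclideanSpace ℝ (Fin d),
        (∀ i, SolvesNODE A W b T S (X i)) ∧
        (∀ i, X i 0 = x i) ∧
        (∀ i, X i T ∈ O (lab i)) :=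
  classification_open_sets_general d M N hd T hT x hx O hOopen hOne lab
end
end

section
/- Let d ≥ 2 and T > 0. Let {x_i}_{i=1}^N ⊂ ℝ^d be pairwise distinct initial points and {z_i}_{i=1}^N ⊂ ℝ^d be pairwise distinct target points. Then there exist piecewise constant controls A, W : [0,T] → ℝ^{d×d} and b : [0,T] → ℝ^d such that the flow of the Neural ODE satisfies φ_T(x_i; A, W, b) = z_i for every i ∈ {1,…,N}. -/
open MeasureTheory Set

noncomputable section

/-!
A single ReLU neuron gated by a coordinate `k`, with constant controls on a time interval,
realises a *shear* `p ↦ p + max (p k - c) 0 • v` with `v k = 0`: the `k`-th coordinate does not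
move, so every trajectory is a straight line. Concatenating time intervals composes shears, and a
shear is undone by the one with velocity `-v`, so it suffices to connect every injective
configuration to one canonical configuration. Finitely many shears make the `k`-th coordinates of
the points pairwise distinct. After that, each point can be moved in turn, in increasing order of
its `k`-th coordinate, anywhere within its hyperplane `{p | p k = const}` without disturbing the
points already placed. Placing the points in this way first in coordinate `k` and then in a
second coordinate `k'` (this is where `d ≥ 2` enters) reaches the configuration `i ↦ e i • eₖ'`.
-/

section Shear

variable {d : ℕ} {ι : Type*}

def shear (k : Fin d) (c : ℝ) (v p : EuclideanSpace ℝ (Fin d)) : EuclideanSpace ℝ (Fin d) :=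
  p + max (p k - c) 0 • v

@[simp]
lemma shear_apply (k : Fin d) (c : ℝ) (v p : EuclideanSpace ℝ (Fin d)) (j : Fin d) :
    shear k c v p j = p j + max (p k - c) 0 * v j := rfl

lemma shear_apply_self {k : Fin d} {v : EuclideanSpace ℝ (Fin d)} (hv : v k = 0) (c : ℝ)
    (p : EuclideanSpace ℝ (Fin d)) : shear k c v p k = p k := by
  simp [hv]

lemma shear_of_le {k : Fin d} {c : ℝ} {p : EuclideanSpace ℝ (Fin d)} (h : p k ≤ c)
    (v : EuclideanSpace ℝ (Fin d)) : shear k c v p = p := by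
  simp [shear, max_eq_right (sub_nonpos.mpr h)]

lemma shear_eq_of_lt {k : Fin d} {c : ℝ} {p : EuclideanSpace ℝ (Fin d)} (h : c < p k)
    (q : EuclideanSpace ℝ (Fin d)) : shear k c ((p k - c)⁻¹ • (q - p)) p = q := by
  rw [shear, max_eq_left (sub_nonneg.mpr h.le), smul_smul,
    mul_inv_cancel₀ (sub_ne_zero.mpr h.ne'), one_smul, add_sub_cancel]

lemma shear_neg_shear {k : Fin d} {v : EuclideanSpace ℝ (Fin d)} (hv : v k = 0) (c : ℝ)
    (p : EuclideanSpace ℝ (Fin d)) : shear k c (-v) (shear k c v p) = p := by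
  ext j
  simp [hv]

lemma shear_injective {k : Fin d} {v : EuclideanSpace ℝ (Fin d)} (hv : v k = 0) (c : ℝ) :
    Function.Injective (shear k c v) :=
  Function.LeftInverse.injective (shear_neg_shear hv c)

def IsShear (x y : ι → EuclideanSpace ℝ (Fin d)) : Prop :=
  ∃ (k : Fin d) (c : ℝ) (v : EuclideanSpace ℝ (Fin d)), v k = 0 ∧ ∀ i, y i = shear k c v (x i)

def ShearReachable : (ι → EuclideanSpace ℝ (Fin d)) → (ι → EuclideanSpace ℝ (Fin d)) → Prop :=
  Relation.ReflTransGen IsShear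

variable {x y : ι → EuclideanSpace ℝ (Fin d)}

lemma IsShear.symm (h : IsShear x y) : IsShear y x := by
  obtain ⟨k, c, v, hv, hy⟩ := h
  have hv' : (-v) k = 0 := by simp [hv]
  exact ⟨k, c, -v, hv', fun i => by rw [hy, shear_neg_shear hv]⟩

lemma IsShear.injective (h : IsShear x y) (hx : Function.Injective x) :
    Function.Injective y := by
  obtain ⟨k, c, v, hv, hy⟩ := h
  intro i j hij
  rw [hy, hy] at hij
  exact hx (shear_injective hv c hij)

lemma ShearReachable.symm (h : ShearReachable x y) : ShearReachable y x := by
  induction h with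
  | refl => exact .refl
  | tail _ hst ih => exact .head hst.symm ih

end Shear

lemma exists_forall_add_mul_eq_imp {ι : Type*} [Finite ι] (f g : ι → ℝ) :
    ∃ τ : ℝ, ∀ i j, f i + g i * τ = f j + g j * τ → g i = g j := by
  obtain ⟨τ, hτ⟩ :=
    (Set.finite_range fun p : ι × ι => (f p.2 - f p.1) / (g p.1 - g p.2)).exists_notMem
  refine ⟨τ, fun i j h => by_contra fun hg => hτ ⟨(i, j), ?_⟩⟩
  field_simp [sub_ne_zero.mpr hg]
  linarith

lemma max_sub_min_ne {a b : ℝ} (h : a ≠ b) : max (a - min a b) 0 ≠ max (b - min a b) 0 := by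
  rcases h.lt_or_gt with h | h
  · simp [min_eq_left h.le, h]
  · simp [min_eq_right h.le, h]

section Separation

variable {d : ℕ} {ι : Type*} {x : ι → EuclideanSpace ℝ (Fin d)}

def coordCollisions (k : Fin d) (x : ι → EuclideanSpace ℝ (Fin d)) : Set (ι × ι) :=
  {p | p.1 ≠ p.2 ∧ x p.1 k = x p.2 k}

/-- Two points colliding in coordinate `k` differ in some coordinate `l`; gating at the smaller
of their `l`-th coordinates opens the gate for only one of them, and a generic velocity along `k`
then separates them without creating new collisions. -/
lemma exists_isShear_coordCollisions_ssubset [Finite ι] {k : Fin d}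
    (hx : Function.Injective x) (hk : ¬ Function.Injective fun i => x i k) :
    ∃ y, IsShear x y ∧ coordCollisions k y ⊂ coordCollisions k x := by
  obtain ⟨i, j, hij, hne⟩ : ∃ i j, x i k = x j k ∧ i ≠ j := by
    simpa [Function.Injective] using hk
  obtain ⟨l, hl⟩ : ∃ l, x i l ≠ x j l := by
    by_contra! h
    exact hne (hx (PiLp.ext h))
  have hlk : k ≠ l := by rintro rfl; exact hl hij
  set c := min (x i l) (x j l)
  set g : ι → ℝ := fun m => max (x m l - c) 0
  obtain ⟨τ, hτ⟩ := exists_forall_add_mul_eq_imp (fun m => x m k) g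
  have hv : EuclideanSpace.single k τ l = 0 := by simp [hlk.symm]
  have hyk : ∀ m, shear l c (EuclideanSpace.single k τ) (x m) k = x m k + g m * τ := by
    simp [g]
  refine ⟨_, ⟨l, c, _, hv, fun m => rfl⟩, ?_⟩
  refine LE.le.ssubset_of_mem_notMem (a := (i, j)) ?_ ⟨hne, hij⟩ ?_
  · rintro ⟨p, q⟩ ⟨hpq, h⟩
    rw [hyk, hyk] at h
    have hg := hτ p q h
    exact ⟨hpq, by simpa [hg] using h⟩
  · rintro ⟨-, h⟩
    rw [hyk, hyk] at h
    exact max_sub_min_ne hl (hτ i j h)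

lemma exists_shearReachable_injective_coord [Finite ι] (k : Fin d)
    (hx : Function.Injective x) :
    ∃ y, ShearReachable x y ∧ Function.Injective fun i => y i k := by
  induction hn : (coordCollisions k x).ncard using Nat.strong_induction_on generalizing x with
  | _ n ih =>
    by_cases hk : Function.Injective fun i => x i k
    · exact ⟨x, .refl, hk⟩
    obtain ⟨y, hxy, hlt⟩ := exists_isShear_coordCollisions_ssubset hx hk
    obtain ⟨z, hyz, hz⟩ := ih _ (hn ▸ Set.ncard_lt_ncard hlt) (hxy.injective hx) rfl
    exact ⟨z, .head hxy hyz, hz⟩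

end Separation

lemma Set.Finite.exists_lt_forall_le {s : Set ℝ} (hs : s.Finite) {r : ℝ}
    (h : ∀ a ∈ s, a < r) : ∃ c < r, ∀ a ∈ s, a ≤ c := by
  obtain ⟨c, hc, hmax⟩ := Set.exists_max_image _ id (hs.insert (r - 1)) (Set.insert_nonempty _ _)
  refine ⟨c, ?_, fun a ha => hmax a (Set.mem_insert_of_mem _ ha)⟩
  rcases hc with rfl | hc
  · linarith
  · exact h c hc

section Placement

variable {d : ℕ} {ι : Type*} {w x y z : ι → EuclideanSpace ℝ (Fin d)}

lemma exists_isShear_move (k : Fin d) {c : ℝ} (a : ι) (hc : c < w a k)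
    {q : EuclideanSpace ℝ (Fin d)} (hq : q k = w a k) :
    ∃ w', IsShear w w' ∧ w' a = q ∧ (∀ i, w' i k = w i k) ∧ ∀ i, w i k ≤ c → w' i = w i := by
  have hv : ((w a k - c)⁻¹ • (q - w a)) k = 0 := by simp [hq]
  exact ⟨_, ⟨k, c, _, hv, fun i => rfl⟩, shear_eq_of_lt hc q,
    fun i => shear_apply_self hv c _, fun i hi => shear_of_le hi _⟩

/-- The points are placed one at a time in increasing order of their `k`-th coordinates, so
that each shear fixes the points placed before. -/
theorem ShearReachable.of_coord_eq [Finite ι] {k : Fin d}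
    (hy : Function.Injective fun i => y i k) (h : ∀ i, w i k = y i k) : ShearReachable w y := by
  classical
  have := Fintype.ofFinite ι
  suffices key : ∀ (F : Finset ι) (w : ι → EuclideanSpace ℝ (Fin d)), (∀ i, w i k = y i k) →
      (∀ i ∉ F, w i = y i) → (∀ i ∈ F, ∀ j ∉ F, y j k < y i k) → ShearReachable w y from
    key Finset.univ w h (by simp) (by simp)
  intro F
  induction F using Finset.induction_on_min_value (fun i => y i k) with
  | empty =>
    intro w _ hw _
    rw [funext fun i => hw i (Finset.notMem_empty i)]
    exact .refl
  | insert a s has hmin ih =>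
    intro w hwk hw hord
    obtain ⟨c, hc, hcle⟩ :=
      (Set.toFinite ((fun j => y j k) '' {j | j ∉ insert a s})).exists_lt_forall_le
        (by rintro _ ⟨j, hj, rfl⟩; exact hord a (s.mem_insert_self a) j hj)
    obtain ⟨w', hww', hw'a, hw'k, hw'⟩ :=
      exists_isShear_move k a (hwk a ▸ hc) (q := y a) (hwk a).symm
    refine .head hww' (ih w' (fun i => (hw'k i).trans (hwk i)) (fun i hi => ?_) fun i hi j hj => ?_)
    · by_cases hia : i = a
      · rwa [hia]
      have hi' : i ∉ insert a s := by simp [hia, hi]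
      rw [hw' i (hwk i ▸ hcle _ ⟨i, hi', rfl⟩), hw i hi']
    · by_cases hja : j = a
      · subst hja
        exact (hmin i hi).lt_of_ne fun h => has (hy h ▸ hi)
      exact hord i (Finset.mem_insert_of_mem hi) j (by simp [hja, hj])

theorem ShearReachable.to_single [Finite ι] {k k' : Fin d} (hkk' : k ≠ k') {e : ι → ℝ}
    (he : Function.Injective e) (hx : Function.Injective x) :
    ShearReachable x fun i => EuclideanSpace.single k' (e i) := by
  obtain ⟨y, hxy, hy⟩ := exists_shearReachable_injective_coord k hx
  let u i := EuclideanSpace.single k (y i k) + EuclideanSpace.single k' (e i)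
  have huk : ∀ i, u i k = y i k := by simp [u, hkk']
  have huk' : ∀ i, u i k' = e i := by simp [u, hkk']
  refine hxy.trans ((ShearReachable.of_coord_eq (k := k) ?_ fun i => (huk i).symm).trans
    (ShearReachable.of_coord_eq (k := k') ?_ fun i => ?_))
  · simpa only [huk] using hy
  · simpa using he
  · simp [huk']

theorem ShearReachable.of_injective [Finite ι] {k k' : Fin d} (hkk' : k ≠ k')
    (hx : Function.Injective x) (hz : Function.Injective z) :
    ShearReachable x z := by
  obtain ⟨e, he⟩ := Countable.exists_injective_nat ι
  have he' : Function.Injective fun i => (e i : ℝ) := Nat.cast_injective.comp he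
  exact (ShearReachable.to_single hkk' he' hx).trans (ShearReachable.to_single hkk' he' hz).symm

end Placement

section Control

open scoped Topology

variable {d : ℕ}

def IsPiecewiseConst {α : Type*} (f : ℝ → α) (S : Finset ℝ) : Prop :=
  ∀ t t', t ≤ t' → (∀ s ∈ S, s ∉ Ioc t t') → f t = f t'

lemma IsPiecewiseConst.const {α : Type*} (a : α) (S : Finset ℝ) :
    IsPiecewiseConst (fun _ => a) S :=
  fun _ _ _ _ => rfl

lemma IsPiecewiseConst.ite {α : Type*} {f g : ℝ → α} {S S' : Finset ℝ}
    (hf : IsPiecewiseConst f S) (hg : IsPiecewiseConst g S') (m : ℝ) :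
    IsPiecewiseConst (fun t => if t < m then f t else g t) (insert m (S ∪ S')) := by
  intro t t' htt' hS
  have hm : ¬ (t < m ∧ m ≤ t') := hS m (Finset.mem_insert_self _ _)
  have hS' : ∀ s ∈ S, s ∉ Ioc t t' := fun s hs => hS s (by simp [hs])
  have hS'' : ∀ s ∈ S', s ∉ Ioc t t' := fun s hs => hS s (by simp [hs])
  by_cases ht : t < m
  · simp only [ht, if_pos (lt_of_not_ge fun h => hm ⟨ht, h⟩)]
    exact hf t t' htt' hS'
  · simp only [ht, if_neg (fun h => ht (htt'.trans_lt h)), if_false]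
    exact hg t t' htt' hS''

lemma IsPiecewiseConst.pcOn {α : Type*} {f : ℝ → α} {S : Finset ℝ} (h : IsPiecewiseConst f S)
    (T : ℝ) : PCOn f T S :=
  fun t _ t' _ => h t t'

def nodeField (A W : Matrix (Fin d) (Fin d) ℝ) (b p : EuclideanSpace ℝ (Fin d)) :
    EuclideanSpace ℝ (Fin d) :=
  mvec W (reluVec (mvec A p + b))

lemma nodeField_zero (A : Matrix (Fin d) (Fin d) ℝ) (b p : EuclideanSpace ℝ (Fin d)) :
    nodeField A 0 b p = 0 := by
  ext i
  simp [nodeField, mvec]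

/-- Every row of the gate matrix is `eₖ`, so `σ(A p + b)` has all its entries equal to
`max (p k - c) 0`, of which the weight matrix (with `k`-th column `v`) picks one. -/
def shearGate (k : Fin d) : Matrix (Fin d) (Fin d) ℝ :=
  Matrix.of fun _ j => if j = k then 1 else 0

def shearWeight (k : Fin d) (v : EuclideanSpace ℝ (Fin d)) : Matrix (Fin d) (Fin d) ℝ :=
  Matrix.of fun i j => if j = k then v i else 0

lemma nodeField_shear (k : Fin d) (c : ℝ) (v p : EuclideanSpace ℝ (Fin d)) :
    nodeField (shearGate k) (shearWeight k v) (WithLp.toLp 2 fun _ => -c) p =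
      max (p k - c) 0 • v := by
  ext i
  simp [nodeField, mvec, reluVec, shearGate, shearWeight, sub_eq_add_neg, mul_comm]

def IsNODESolution (A W : ℝ → Matrix (Fin d) (Fin d) ℝ) (b : ℝ → EuclideanSpace ℝ (Fin d))
    (S : Finset ℝ) (X : ℝ → EuclideanSpace ℝ (Fin d)) : Prop :=
  Continuous X ∧ ∀ t ∉ S, HasDerivAt X (nodeField (A t) (W t) (b t) (X t)) t

lemma IsNODESolution.solvesNODE {A W : ℝ → Matrix (Fin d) (Fin d) ℝ}
    {b : ℝ → EuclideanSpace ℝ (Fin d)} {S : Finset ℝ} {X : ℝ → EuclideanSpace ℝ (Fin d)}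
    (h : IsNODESolution A W b S X) (T : ℝ) : SolvesNODE A W b T S X :=
  ⟨h.1.continuousOn, fun t _ ht => (h.2 t ht).hasDerivWithinAt⟩

lemma IsNODESolution.ite {A₁ A₂ W₁ W₂ : ℝ → Matrix (Fin d) (Fin d) ℝ}
    {b₁ b₂ : ℝ → EuclideanSpace ℝ (Fin d)} {S₁ S₂ : Finset ℝ}
    {X₁ X₂ : ℝ → EuclideanSpace ℝ (Fin d)} (h₁ : IsNODESolution A₁ W₁ b₁ S₁ X₁)
    (h₂ : IsNODESolution A₂ W₂ b₂ S₂ X₂) {m : ℝ} (hm : X₁ m = X₂ m) :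
    IsNODESolution (fun t => if t < m then A₁ t else A₂ t) (fun t => if t < m then W₁ t else W₂ t)
      (fun t => if t < m then b₁ t else b₂ t) (insert m (S₁ ∪ S₂))
      (fun t => if t ≤ m then X₁ t else X₂ t) := by
  refine ⟨h₁.1.if_le h₂.1 continuous_id continuous_const fun t ht => ht ▸ hm, fun t ht => ?_⟩
  simp only [Finset.mem_insert, Finset.mem_union, not_or] at ht
  obtain ⟨htm, ht₁, ht₂⟩ := ht
  rcases lt_or_gt_of_ne htm with hlt | hgt
  · have hX : (fun t => if t ≤ m then X₁ t else X₂ t) =ᶠ[𝓝 t] X₁ :=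
      (eventually_lt_nhds hlt).mono fun s hs => if_pos hs.le
    simp only [if_pos hlt, if_pos hlt.le]
    exact (h₁.2 t ht₁).congr_of_eventuallyEq hX
  · have hX : (fun t => if t ≤ m then X₁ t else X₂ t) =ᶠ[𝓝 t] X₂ :=
      (eventually_gt_nhds hgt).mono fun s hs => if_neg hs.not_ge
    simp only [if_neg hgt.not_gt, if_neg hgt.not_ge]
    exact (h₂.2 t ht₂).congr_of_eventuallyEq hX

/-- Controls and trajectories live on all of `ℝ`, so that concatenation only needs local
arguments. -/
def Steerable {ι : Type*} (t₀ t₁ : ℝ) (x z : ι → EuclideanSpace ℝ (Fin d)) : Prop :=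
  ∃ (A W : ℝ → Matrix (Fin d) (Fin d) ℝ) (b : ℝ → EuclideanSpace ℝ (Fin d)) (S : Finset ℝ),
    IsPiecewiseConst A S ∧ IsPiecewiseConst W S ∧ IsPiecewiseConst b S ∧
    ∃ X : ι → ℝ → EuclideanSpace ℝ (Fin d),
      (∀ i, IsNODESolution A W b S (X i)) ∧ (∀ i, X i t₀ = x i) ∧ ∀ i, X i t₁ = z i

variable {ι : Type*} {x y z : ι → EuclideanSpace ℝ (Fin d)}

lemma steerable_refl (t₀ t₁ : ℝ) (x : ι → EuclideanSpace ℝ (Fin d)) : Steerable t₀ t₁ x x :=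
  ⟨0, 0, 0, ∅, .const _ _, .const _ _, .const _ _, fun i _ => x i,
    fun i => ⟨continuous_const, fun t _ => by
      simpa [nodeField_zero] using hasDerivAt_const t (x i)⟩,
    fun _ => rfl, fun _ => rfl⟩

lemma Steerable.trans {t₀ m t₁ : ℝ} (h₁ : Steerable t₀ m x y) (h₂ : Steerable m t₁ y z)
    (ht₀ : t₀ ≤ m) (ht₁ : m < t₁) : Steerable t₀ t₁ x z := by
  obtain ⟨A₁, W₁, b₁, S₁, hA₁, hW₁, hb₁, X₁, hX₁, hx, hy₁⟩ := h₁
  obtain ⟨A₂, W₂, b₂, S₂, hA₂, hW₂, hb₂, X₂, hX₂, hy₂, hz⟩ := h₂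
  exact ⟨_, _, _, _, hA₁.ite hA₂ m, hW₁.ite hW₂ m, hb₁.ite hb₂ m, _,
    fun i => (hX₁ i).ite (hX₂ i) ((hy₁ i).trans (hy₂ i).symm),
    fun i => by simp [ht₀, hx], fun i => by simp [ht₁.not_ge, hz]⟩

/-- The gating coordinate does not move, so under the constant controls of `nodeField_shear`
with velocity `(t₁ - t₀)⁻¹ • v` the trajectories are straight lines. -/
lemma IsShear.steerable (h : IsShear x y) {t₀ t₁ : ℝ} (ht : t₀ < t₁) : Steerable t₀ t₁ x y := by
  obtain ⟨k, c, v, hv, hy⟩ := h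
  set v' := (t₁ - t₀)⁻¹ • v
  have hv' : v' k = 0 := by simp [v', hv]
  refine ⟨fun _ => shearGate k, fun _ => shearWeight k v', fun _ => WithLp.toLp 2 fun _ => -c, ∅,
    .const _ _, .const _ _, .const _ _, fun i t => x i + ((t - t₀) * max (x i k - c) 0) • v',
    fun i => ⟨by fun_prop, fun t _ => ?_⟩, fun i => by simp, fun i => ?_⟩
  · have hXk : (x i + ((t - t₀) * max (x i k - c) 0) • v') k = x i k := by simp [hv']
    rw [nodeField_shear, hXk]
    simpa using (((hasDerivAt_id t).sub_const t₀).mul_const (max (x i k - c) 0)).smul_const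
      v' |>.const_add (x i)
  · simp only [hy, shear, smul_smul, v']
    rw [mul_right_comm, mul_inv_cancel₀ (sub_ne_zero.mpr ht.ne'), one_mul]

lemma ShearReachable.steerable (h : ShearReachable x z) {t₀ t₁ : ℝ} (ht : t₀ < t₁) :
    Steerable t₀ t₁ x z := by
  induction h using Relation.ReflTransGen.head_induction_on generalizing t₀ with
  | refl => exact steerable_refl t₀ t₁ z
  | head hxy _ ih =>
    exact (hxy.steerable (by linarith : t₀ < (t₀ + t₁) / 2)).trans (ih (by linarith)) (by linarith)
      (by linarith)

end Control

/-- **Exact simultaneous control** (Theorem 2 of the paper).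
Given pairwise distinct initial points and pairwise distinct targets in `ℝ^d`
(`d ≥ 2`), there are piecewise constant controls whose neural-ODE flow drives
each initial point exactly onto its target at time `T`. -/
theorem exact_simultaneous_control
    (d N : ℕ) (hd : 2 ≤ d) (T : ℝ) (hT : 0 < T)
    (x z : Fin N → EuclideanSpace ℝ (Fin d))
    (hx : Function.Injective x) (hz : Function.Injective z) :
    ∃ (A W : ℝ → Matrix (Fin d) (Fin d) ℝ) (b : ℝ → EuclideanSpace ℝ (Fin d))
      (S : Finset ℝ),
      PCOn A T S ∧ PCOn W T S ∧ PCOn b T S ∧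
      ∃ X : Fin N → ℝ → EuclideanSpace ℝ (Fin d),
        (∀ i, SolvesNODE A W b T S (X i)) ∧
        (∀ i, X i 0 = x i) ∧
        (∀ i, X i T = z i) := by
  have hkk' : (⟨0, by omega⟩ : Fin d) ≠ ⟨1, by omega⟩ := by simp
  obtain ⟨A, W, b, S, hA, hW, hb, X, hX, hX₀, hXT⟩ :=
    (ShearReachable.of_injective hkk' hx hz).steerable hT
  exact ⟨A, W, b, S, hA.pcOn T, hW.pcOn T, hb.pcOn T, X, fun i => (hX i).solvesNODE T, hX₀, hXT⟩
end
end

section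
/- (Sparse simultaneous control.) Let d ≥ 2 and T > 0, and let σ : ℝ → ℝ be the ReLU σ(s) = max(s,0). Let {x_i}_{i=1}^N ⊂ ℝ^d be pairwise distinct initial points and {z_i}_{i=1}^N ⊂ ℝ^d be pairwise distinct targets. Then there exist piecewise constant controls w, a : [0,T] → ℝ^d and b : [0,T] → ℝ (a total of 2d+1 scalar controls) such that for every i, the unique solution of ẋ(t) = w(t) σ(⟨a(t), x(t)⟩ + b(t)), x(0) = x_i satisfies x(T) = z_i. -/
open MeasureTheory Set

noncomputable section

/-! A constant control `(w, a, b)` with `⟪a, w⟫ = 0` is a shear: it conserves `⟪a, x⟫`, so each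
point moves along `w` by an amount `σ(⟪a, x⟫ + b)` that depends only on its own fibre of `⟪a, ·⟫`.
Three shears combine `σ(s + ε) - 2σ(s) + σ(s - ε)`, a hat in `s = ⟪a, x⟫ - ⟪a, xᵢ⟫`, which moves
`xᵢ` anywhere within its fibre and fixes every point whose `a`-coordinate is at least `ε` away.
So points with distinct `a`-coordinates can be moved independently within their fibres.

Choose `a` separating the initial points and also the targets, and a unit vector `b ⊥ a` (this
is where `d ≥ 2` enters). Move each `xᵢ` within its `a`-fibre to `b`-coordinate `i`; now the
`b`-fibres separate the points, so move them within these fibres to the `a`-coordinates of the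
targets; finally move them within the `a`-fibres onto the `zᵢ`. -/

open Filter Topology Function
open scoped RealInnerProductSpace

namespace SparseControl

section ControlSystem

variable {α U E ι : Type*} [NormedAddCommGroup E] [NormedSpace ℝ E]

lemma PCOn.comp {β : Type*} {f : ℝ → α} {T : ℝ} {S : Finset ℝ} (hf : PCOn f T S) (g : α → β) :
    PCOn (fun t => g (f t)) T S :=
  fun t₁ ht₁ t₂ ht₂ hle hS => congrArg g (hf t₁ ht₁ t₂ ht₂ hle hS)

lemma pcOn_const (c : α) (T : ℝ) (S : Finset ℝ) : PCOn (fun _ => c) T S :=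
  fun _ _ _ _ _ _ => rfl

/-- Strict `t < T₁`: the pieces of `PCOn` are the half-open intervals `[sₖ, sₖ₊₁)`. -/
def concat (T₁ : ℝ) (f g : ℝ → α) (t : ℝ) : α := if t < T₁ then f t else g (t - T₁)

def concatSwitches (T₁ : ℝ) (S₁ S₂ : Finset ℝ) : Finset ℝ :=
  insert T₁ (S₁ ∪ S₂.image (· + T₁))

lemma pcOn_concat {f g : ℝ → α} {T₁ T₂ : ℝ} {S₁ S₂ : Finset ℝ}
    (hf : PCOn f T₁ S₁) (hg : PCOn g T₂ S₂) :
    PCOn (concat T₁ f g) (T₁ + T₂) (concatSwitches T₁ S₁ S₂) := by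
  intro t₁ ht₁ t₂ ht₂ hle hS
  have hT₁ : T₁ ∉ Ioc t₁ t₂ := hS T₁ (Finset.mem_insert_self _ _)
  by_cases h₂ : t₂ < T₁
  · have h₁ : t₁ < T₁ := hle.trans_lt h₂
    simp only [concat, if_pos h₁, if_pos h₂]
    exact hf t₁ ⟨ht₁.1, h₁.le⟩ t₂ ⟨ht₂.1, h₂.le⟩ hle
      fun s hs => hS s (by simp [concatSwitches, hs])
  · have h₁ : ¬ t₁ < T₁ := fun h₁ => hT₁ ⟨h₁, not_lt.1 h₂⟩
    simp only [concat, if_neg h₁, if_neg h₂]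
    refine hg _ ⟨by linarith, by linarith [ht₁.2]⟩ _ ⟨by linarith, by linarith [ht₂.2]⟩
      (by linarith) fun s hs hmem => hS (s + T₁) ?_ ⟨by linarith [hmem.1], by linarith [hmem.2]⟩
    simp [concatSwitches, hs]

def IsTrajectory (F : U → E → E) (T : ℝ) (S : Finset ℝ) (u : ℝ → U) (X : ℝ → E) : Prop :=
  ContinuousOn X (Icc 0 T) ∧
    ∀ t ∈ Icc (0 : ℝ) T, t ∉ S → HasDerivWithinAt X (F (u t) (X t)) (Icc 0 T) t

lemma isTrajectory_concat {F : U → E → E} {T₁ T₂ : ℝ} {S₁ S₂ : Finset ℝ} {u₁ u₂ : ℝ → U}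
    {X₁ X₂ : ℝ → E} (h₁ : IsTrajectory F T₁ S₁ u₁ X₁) (h₂ : IsTrajectory F T₂ S₂ u₂ X₂)
    (hT₁ : 0 ≤ T₁) (hT₂ : 0 ≤ T₂) (hX : X₁ T₁ = X₂ 0) :
    IsTrajectory F (T₁ + T₂) (concatSwitches T₁ S₁ S₂) (concat T₁ u₁ u₂) (concat T₁ X₁ X₂) := by
  have shift_mapsTo : MapsTo (· - T₁) (Icc T₁ (T₁ + T₂)) (Icc 0 T₂) :=
    fun s ⟨h₁, h₂⟩ => ⟨sub_nonneg.2 h₁, sub_le_iff_le_add'.2 h₂⟩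
  have eqOn₁ : EqOn (concat T₁ X₁ X₂) X₁ (Icc 0 T₁) := fun t ht => by
    rcases ht.2.lt_or_eq with h | rfl
    · simp [concat, h]
    · simp [concat, hX]
  have eqOn₂ : EqOn (concat T₁ X₁ X₂) (fun t => X₂ (t - T₁)) (Icc T₁ (T₁ + T₂)) :=
    fun t ht => if_neg (not_lt.2 ht.1)
  refine ⟨?_, fun t ht htS => ?_⟩
  · rw [← Icc_union_Icc_eq_Icc hT₁ (by linarith)]
    refine ContinuousOn.union_of_isClosed (h₁.1.congr eqOn₁) ?_ isClosed_Icc isClosed_Icc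
    exact (h₂.1.comp (continuous_sub_right T₁).continuousOn shift_mapsTo).congr eqOn₂
  rcases lt_or_gt_of_ne (show t ≠ T₁ from fun h => htS (h ▸ Finset.mem_insert_self _ _))
    with hlt | hgt
  · have hD := h₁.2 t ⟨ht.1, hlt.le⟩ fun h => htS (by simp [concatSwitches, h])
    rw [← hasDerivWithinAt_inter (Iio_mem_nhds hlt)]
    simp only [concat, if_pos hlt]
    exact hD.congr_mono (fun s hs => eqOn₁ ⟨hs.1.1, hs.2.le⟩) (if_pos hlt)
      fun s hs => ⟨hs.1.1, hs.2.le⟩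
  · have hD := h₂.2 (t - T₁) ⟨by linarith, by linarith [ht.2]⟩
      fun h => htS (Finset.mem_insert_of_mem
        (Finset.mem_union_right _ (Finset.mem_image.2 ⟨_, h, sub_add_cancel t T₁⟩)))
    have hshift : HasDerivWithinAt (fun s => X₂ (s - T₁)) (F (u₂ (t - T₁)) (X₂ (t - T₁)))
        (Icc T₁ (T₁ + T₂)) t := by
      simpa [Function.comp_def] using hD.scomp t ((hasDerivAt_id t).sub_const T₁).hasDerivWithinAt
        shift_mapsTo
    rw [← hasDerivWithinAt_inter (Ioi_mem_nhds hgt)]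
    simp only [concat, if_neg hgt.not_gt]
    exact hshift.congr_mono (fun s hs => eqOn₂ ⟨hs.2.le, hs.1.2⟩) (if_neg hgt.not_gt)
      fun s hs => ⟨hs.2.le, hs.1.2⟩

def Reach (F : U → E → E) (T : ℝ) (x z : ι → E) : Prop :=
  ∃ (u : ℝ → U) (S : Finset ℝ), PCOn u T S ∧ ∃ X : ι → ℝ → E,
    (∀ i, IsTrajectory F T S u (X i)) ∧ (∀ i, X i 0 = x i) ∧ ∀ i, X i T = z i

lemma Reach.trans {F : U → E → E} {T₁ T₂ : ℝ} {x y z : ι → E} (hT₁ : 0 < T₁) (hT₂ : 0 ≤ T₂)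
    (hxy : Reach F T₁ x y) (hyz : Reach F T₂ y z) : Reach F (T₁ + T₂) x z := by
  obtain ⟨u₁, S₁, hu₁, X₁, hX₁, hX₁0, hX₁T⟩ := hxy
  obtain ⟨u₂, S₂, hu₂, X₂, hX₂, hX₂0, hX₂T⟩ := hyz
  refine ⟨concat T₁ u₁ u₂, concatSwitches T₁ S₁ S₂, pcOn_concat hu₁ hu₂,
    fun i => concat T₁ (X₁ i) (X₂ i), fun i => isTrajectory_concat (hX₁ i) (hX₂ i) hT₁.le hT₂
      (by rw [hX₁T, hX₂0]), fun i => by simp [concat, hT₁, hX₁0], fun i => ?_⟩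
  simp [concat, hT₂, hX₂T]

lemma reach_of_constant_velocity {F : U → E → E} (T : ℝ) (c : U) (x v : ι → E)
    (hv : ∀ i (t : ℝ), F c (x i + t • v i) = v i) : Reach F T x (fun i => x i + T • v i) := by
  refine ⟨fun _ => c, ∅, pcOn_const c T ∅, fun i t => x i + t • v i,
    fun i => ⟨by fun_prop, fun t _ _ => ?_⟩, fun i => by simp, fun i => rfl⟩
  simpa [hv] using ((hasDerivAt_id t).smul_const (v i)).const_add (x i) |>.hasDerivWithinAt

def Steerable (F : U → E → E) (x z : ι → E) : Prop := ∀ T > 0, Reach F T x z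

lemma Steerable.trans {F : U → E → E} {x y z : ι → E} (hxy : Steerable F x y)
    (hyz : Steerable F y z) : Steerable F x z := fun T hT => by
  simpa using (hxy (T / 2) (half_pos hT)).trans (half_pos hT) (half_pos hT).le
    (hyz (T / 2) (half_pos hT))

end ControlSystem

section Sparse

variable {E ι : Type*} [NormedAddCommGroup E] [InnerProductSpace ℝ E]

def sparseField (c : E × E × ℝ) (x : E) : E := max (⟪c.2.1, x⟫ + c.2.2) 0 • c.1

def shear (a u : E) (b : ℝ) (x : E) : E := x + max (⟪a, x⟫ + b) 0 • u

lemma inner_shear {a u : E} (hau : ⟪a, u⟫ = 0) (b : ℝ) (x : E) :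
    ⟪a, shear a u b x⟫ = ⟪a, x⟫ := by
  simp [shear, inner_add_right, inner_smul_right, hau]

lemma steerable_shear {a u : E} (hau : ⟪a, u⟫ = 0) (b : ℝ) (x : ι → E) :
    Steerable sparseField x (fun i => shear a u b (x i)) := fun T hT => by
  have hv : ∀ i (t : ℝ), sparseField (T⁻¹ • u, a, b) (x i + t • (T⁻¹ • max (⟪a, x i⟫ + b) 0 • u))
      = T⁻¹ • max (⟪a, x i⟫ + b) 0 • u := fun i t => by
    simp [sparseField, inner_add_right, inner_smul_right, hau, smul_comm (T⁻¹)]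
  simpa [smul_smul, hT.ne', shear] using reach_of_constant_velocity T _ x _ hv

/-- The hat of height `ε` on `[-ε, ε]`. -/
def tent (ε s : ℝ) : ℝ := max (s + ε) 0 - 2 * max s 0 + max (s - ε) 0

lemma tent_zero {ε : ℝ} (hε : 0 ≤ ε) : tent ε 0 = ε := by
  simp [tent, hε]

lemma tent_eq_zero_of_le_abs {ε s : ℝ} (hε : 0 ≤ ε) (hs : ε ≤ |s|) : tent ε s = 0 := by
  rcases le_abs'.1 hs with hs | hs
  · simp only [tent, max_eq_right (by linarith : s + ε ≤ 0), max_eq_right (by linarith : s ≤ 0),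
      max_eq_right (by linarith : s - ε ≤ 0)]
    ring
  · simp only [tent, max_eq_left (by linarith : 0 ≤ s + ε), max_eq_left (by linarith : 0 ≤ s),
      max_eq_left (by linarith : 0 ≤ s - ε)]
    ring

lemma steerable_add_tent {a u : E} (hau : ⟪a, u⟫ = 0) (ε c : ℝ) (p : ι → E) :
    Steerable sparseField p (fun j => p j + tent ε (⟪a, p j⟫ - c) • u) := by
  have hau₂ : ⟪a, (-2 : ℝ) • u⟫ = 0 := by simp [inner_smul_right, hau]
  convert ((steerable_shear hau (ε - c) p).trans (steerable_shear hau₂ (-c) _)).trans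
    (steerable_shear hau (-ε - c) _) using 2 with j
  rw [shear, inner_shear hau₂, inner_shear hau, shear, inner_shear hau, shear, tent]
  rw [show ⟪a, p j⟫ + (ε - c) = ⟪a, p j⟫ - c + ε by ring, ← sub_eq_add_neg,
    show ⟪a, p j⟫ + (-ε - c) = ⟪a, p j⟫ - c - ε by ring]
  module

lemma exists_pos_le_abs_sub_of_injective [Finite ι] {f : ι → ℝ} (hf : Injective f)
    (i : ι) : ∃ ε > 0, ∀ j ≠ i, ε ≤ |f j - f i| := by
  have hsmall : ∀ᶠ ε in 𝓝 (0 : ℝ), ∀ j, j ≠ i → ε ≤ |f j - f i| :=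
    eventually_all.2 fun j => by
      rcases eq_or_ne j i with rfl | hj
      · simp
      · filter_upwards [eventually_lt_nhds (abs_pos.2 (sub_ne_zero.2 (hf.ne hj)))]
          with ε hε _ using hε.le
  obtain ⟨ε, hε, hεpos⟩ := ((hsmall.filter_mono nhdsWithin_le_nhds).and
    (self_mem_nhdsWithin : Ioi (0 : ℝ) ∈ 𝓝[>] 0)).exists
  exact ⟨ε, hεpos, hε⟩


/-- The tent centred at `⟪a, p i⟫` is narrower than the gaps to the other points. -/
lemma steerable_update [Finite ι] [DecidableEq ι] {a : E} {p : ι → E}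
    (hp : Injective fun j => ⟪a, p j⟫) (i : ι) {y : E} (hy : ⟪a, y⟫ = ⟪a, p i⟫) :
    Steerable sparseField p (update p i y) := by
  obtain ⟨ε, hε, hεsep⟩ := exists_pos_le_abs_sub_of_injective hp i
  have hau : ⟪a, ε⁻¹ • (y - p i)⟫ = 0 := by simp [inner_smul_right, inner_sub_right, hy]
  convert steerable_add_tent hau ε ⟪a, p i⟫ p using 2 with j
  rcases eq_or_ne j i with rfl | hj
  · simp [tent_zero hε.le, smul_smul, hε.ne']
  · simp [update_of_ne hj, tent_eq_zero_of_le_abs hε.le (hεsep j hj)]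

lemma steerable_of_inner_eq [Finite ι] {a : E} {p q : ι → E}
    (hp : Injective fun j => ⟪a, p j⟫) (hq : ∀ j, ⟪a, q j⟫ = ⟪a, p j⟫) :
    Steerable sparseField p q := by
  classical
  have := Fintype.ofFinite ι
  have hinner (s : Finset ι) (j : ι) : ⟪a, s.piecewise q p j⟫ = ⟪a, p j⟫ := by
    by_cases hj : j ∈ s <;> simp [hj, hq]
  have hstep (s : Finset ι) : Steerable sparseField p (s.piecewise q p) := by
    induction s using Finset.induction_on with
    | empty => simpa [shear] using steerable_shear (inner_zero_right a) 0 p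
    | insert k s _ ih =>
      rw [Finset.piecewise_insert]
      refine ih.trans (steerable_update ?_ k ((hq k).trans (hinner s k).symm))
      simpa only [hinner] using hp
  simpa using hstep Finset.univ

/-- A real vector space is not a finite union of hyperplanes. -/
lemma exists_forall_inner_ne_zero {κ : Type*} [Finite κ] {v : κ → E} (hv : ∀ k, v k ≠ 0) :
    ∃ a : E, ∀ k, ⟪a, v k⟫ ≠ 0 := by
  by_contra! h
  have hcover : ⋃ k, ((ℝ ∙ v k)ᗮ : Set E) = univ :=
    eq_univ_of_forall fun a => mem_iUnion.2 <| (h a).imp fun k hk =>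
      Submodule.mem_orthogonal_singleton_iff_inner_left.2 hk
  obtain ⟨k, hk⟩ := Subspace.exists_eq_top_of_iUnion_eq_univ hcover
  have hvk : v k ∈ (ℝ ∙ v k)ᗮ := hk ▸ Submodule.mem_top
  exact hv k (inner_self_eq_zero.1 (Submodule.mem_orthogonal_singleton_iff_inner_right.1 hvk))

lemma exists_forall_injective_inner {κ : Type*} [Finite κ] [Finite ι] {x : κ → ι → E}
    (hx : ∀ k, Injective (x k)) : ∃ a : E, ∀ k, Injective fun i => ⟪a, x k i⟫ := by
  obtain ⟨a, ha⟩ := exists_forall_inner_ne_zero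
    (v := fun kp : κ × {p : ι × ι // p.1 ≠ p.2} => x kp.1 kp.2.1.1 - x kp.1 kp.2.1.2)
    fun kp => sub_ne_zero.2 ((hx kp.1).ne kp.2.2)
  refine ⟨a, fun k i j hij => by_contra fun hne => ha (k, ⟨(i, j), hne⟩) ?_⟩
  simpa [inner_sub_right, sub_eq_zero] using hij

lemma exists_norm_eq_one_inner_eq_zero [FiniteDimensional ℝ E] (hE : 2 ≤ Module.finrank ℝ E)
    (a : E) : ∃ b : E, ‖b‖ = 1 ∧ ⟪a, b⟫ = 0 := by
  have hspan : Module.finrank ℝ (ℝ ∙ a) ≤ 1 := by simpa using finrank_span_le_card (R := ℝ) {a}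
  have hperp : (ℝ ∙ a)ᗮ ≠ ⊥ := fun h => by
    have := (ℝ ∙ a).finrank_add_finrank_orthogonal
    rw [h, finrank_bot] at this
    omega
  obtain ⟨b, hb, hb0⟩ := Submodule.exists_mem_ne_zero_of_ne_bot hperp
  refine ⟨(‖b‖⁻¹ : ℝ) • b, norm_smul_inv_norm hb0, ?_⟩
  simp [inner_smul_right, Submodule.mem_orthogonal_singleton_iff_inner_right.1 hb]

lemma steerable_of_injective [FiniteDimensional ℝ E] (hE : 2 ≤ Module.finrank ℝ E) [Finite ι]
    {x z : ι → E} (hx : Injective x) (hz : Injective z) : Steerable sparseField x z := by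
  obtain ⟨a, ha⟩ := exists_forall_injective_inner (x := ![x, z]) (Fin.forall_fin_two.2 ⟨hx, hz⟩)
  obtain ⟨b, hb, hab⟩ := exists_norm_eq_one_inner_eq_zero hE a
  obtain ⟨n, hn⟩ := Countable.exists_injective_nat ι
  let lift (y : ι → E) (i : ι) : E := y i + ((n i : ℝ) - ⟪b, y i⟫) • b
  have inner_a (y : ι → E) (i : ι) : ⟪a, lift y i⟫ = ⟪a, y i⟫ := by
    simp [lift, inner_add_right, inner_smul_right, hab]
  have inner_b (y : ι → E) (i : ι) : ⟪b, lift y i⟫ = n i := by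
    simp [lift, inner_add_right, inner_smul_right, hb]
  have hlift : Injective fun i => ⟪b, lift x i⟫ := by
    simp only [inner_b]
    exact Nat.cast_injective.comp hn
  refine ((steerable_of_inner_eq (ha 0) (inner_a x)).trans
    (steerable_of_inner_eq hlift fun i => (inner_b z i).trans (inner_b x i).symm)).trans
    (steerable_of_inner_eq ?_ fun i => (inner_a z i).symm)
  simp only [inner_a]
  exact ha 1

end Sparse

end SparseControl

open SparseControl in
/-- **Sparse simultaneous control** (Remark on sparsity).
With only `2d+1` scalar controls — vectors `w(t), a(t) ∈ ℝ^d` and a scalar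
`b(t)`, all piecewise constant — the rank-one neural ODE
`ẋ = w(t) σ(⟨a(t), x⟩ + b(t))` (ReLU `σ`) drives any `N` pairwise distinct
points exactly onto any `N` pairwise distinct targets in time `T`. -/
theorem sparse_simultaneous_control
    (d N : ℕ) (hd : 2 ≤ d) (T : ℝ) (hT : 0 < T)
    (x z : Fin N → EuclideanSpace ℝ (Fin d))
    (hx : Function.Injective x) (hz : Function.Injective z) :
    ∃ (w a : ℝ → EuclideanSpace ℝ (Fin d)) (b : ℝ → ℝ) (S : Finset ℝ),
      PCOn w T S ∧ PCOn a T S ∧ PCOn b T S ∧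
      ∃ X : Fin N → ℝ → EuclideanSpace ℝ (Fin d),
        (∀ i, ContinuousOn (X i) (Set.Icc 0 T)) ∧
        (∀ i, ∀ t ∈ Set.Icc (0:ℝ) T, t ∉ S →
          HasDerivWithinAt (X i)
            ((max ((inner ℝ (a t) (X i t) : ℝ) + b t) 0) • w t) (Set.Icc 0 T) t) ∧
        (∀ i, X i 0 = x i) ∧
        (∀ i, X i T = z i) := by
  have hE : 2 ≤ Module.finrank ℝ (EuclideanSpace ℝ (Fin d)) := by simpa using hd
  obtain ⟨u, S, hu, X, hX, hX0, hXT⟩ := steerable_of_injective hE hx hz T hT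
  exact ⟨fun t => (u t).1, fun t => (u t).2.1, fun t => (u t).2.2, S, hu.comp (·.1),
    hu.comp (·.2.1), hu.comp (·.2.2), X, fun i => (hX i).1, fun i => (hX i).2, hX0, hXT⟩
end
end
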